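/- arXiv:1806.05962 — 9 statements merged into one kernel-verified Lean document; each statement's English description precedes it below -/
import Mathlib

section
/- Let σ = q^s with gcd(s,n)=1, and let f(x) = a_0 x + a_1 x^σ + ... + a_{k-1} x^{σ^{k-1}} - x^{σ^k} with a_i ∈ F_{q^n}. Let A be the k×k companion-type matrix with subdiagonal entries 1, last column (a_0,...,a_{k-1})^T, and zeros elsewhere. Then f has exactly q^k roots in F_{q^n} (i.e., its kernel has F_q-dimension k) if and only if A · A^σ · ... · A^{σ^{n-1}} = I_k, where A^{σ^i} denotes entrywise application of x ↦ x^{σ^i}. -/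
/-!
Write `φ x = x ^ σ`. The map `x ↦ (x, φ x, …, φ^{k-1} x)` identifies the roots of `f` with the
row vectors `u` satisfying `φ u = u A`, i.e. with the fixed points of the `φ⁻¹`-semilinear map
`T u = φ⁻¹ (u A)`. As `gcd (s, n) = 1`, the fixed field of `φ` is `𝔽_q`, and Galois descent
shows that the fixed points of `T` form an `𝔽_q`-space of dimension `d = dim_L span (Fix T)`;
hence `f` has `q ^ d` roots. Moreover `T^n u = u A A^σ ⋯ A^{σ^{n-1}}`. If `Fix T` spans `L^k`,
the product is therefore `I`; conversely, if the product is `I` then `T^n = id`, every trace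
`∑ T^i w` is fixed, and Dedekind's independence of the characters `φ^{-i}` shows that these
traces span `L^k`.
-/

open Module Submodule Polynomial Function Matrix

section SemilinearFixedPoints

variable {K V : Type*} [Field K] [AddCommGroup V] [Module K V] {τ : K →+* K}

theorem LinearMap.iterate_map_smul (T : V →ₛₗ[τ] V) (i : ℕ) (c : K) (v : V) :
    T^[i] (c • v) = τ^[i] c • T^[i] v := by
  induction i generalizing v with
  | zero => rfl
  | succ i ih => simp only [iterate_succ_apply', ih, map_smulₛₗ]

theorem eq_zero_of_forall_sum_monoidHom_smul_eq_zero {ι : Type*} [Fintype ι]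
    {χ : ι → K →* K} (hχ : Injective χ) {y : ι → V}
    (h : ∀ c : K, ∑ i, χ i c • y i = 0) (i : ι) : y i = 0 := by
  rw [← forall_dual_apply_eq_zero_iff K]
  intro f
  have hli := Fintype.linearIndependent_iff.mp
    ((linearIndependent_monoidHom K K).comp χ hχ) (fun j => f (y j))
  refine hli (funext fun c => ?_) i
  simpa [Finset.sum_apply, mul_comm] using congrArg f (h c)

theorem span_setOf_apply_eq_self_eq_top (T : V →ₛₗ[τ] V) {m : ℕ} (hm : 0 < m)
    (hTm : T^[m] = id) (hτ : Injective fun i : Fin m => (⇑τ)^[i]) :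
    span K {v | T v = v} = ⊤ := by
  set W := span K {v | T v = v}
  have trace_mem (w : V) : ∑ i : Fin m, T^[i] w ∈ W := by
    refine subset_span (?_ : T _ = _)
    rw [map_sum, Fin.sum_univ_eq_sum_range (fun i => T (T^[i] w)),
      Fin.sum_univ_eq_sum_range (fun i => T^[i] w)]
    obtain ⟨m, rfl⟩ := Nat.exists_eq_add_one_of_ne_zero hm.ne'
    simp_rw [← iterate_succ_apply' T]
    rw [Finset.sum_range_succ, Finset.sum_range_succ' (fun i => T^[i] w), hTm]
    rfl
  have hχ : Injective fun i : Fin m => (τ ^ (i : ℕ)).toMonoidHom := by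
    intro i j hij
    exact hτ (by simpa using congrArg DFunLike.coe hij)
  refine eq_top_iff.mpr fun w _ => ?_
  rw [← Quotient.mk_eq_zero]
  refine eq_zero_of_forall_sum_monoidHom_smul_eq_zero hχ
    (y := fun i : Fin m => Submodule.Quotient.mk (p := W) (T^[i] w)) (fun c => ?_) ⟨0, hm⟩
  have htrace : W.mkQ (∑ i : Fin m, T^[i] (c • w)) = 0 :=
    (Quotient.mk_eq_zero W).mpr (trace_mem (c • w))
  simpa only [map_sum, LinearMap.iterate_map_smul, map_smul, mkQ_apply,
    RingHom.toMonoidHom_eq_coe, MonoidHom.coe_coe, RingHom.coe_pow] using htrace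

theorem ncard_setOf_apply_eq_self [FiniteDimensional K V] (T : V →ₛₗ[τ] V) :
    {v | T v = v}.ncard = {c : K | τ c = c}.ncard ^ finrank K (span K {v | T v = v}) := by
  -- A basis `b` of `span K (Fix T)` taken inside `Fix T`; a combination of it is `T`-fixed
  -- exactly when its coefficients are `τ`-fixed.
  obtain ⟨b, hbT, hbspan, hbli⟩ := exists_linearIndependent K {v | T v = v}
  have : Fintype b := hbli.setFinite.fintype
  set Ψ : (b → {c : K | τ c = c}) → V := fun c => ∑ i, (c i : K) • (i : V)
  have hΨ : Injective Ψ := fun c c' h =>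
    funext fun i => Subtype.ext (Fintype.linearIndependent_iffₛ.mp hbli _ _ h i)
  have map_sum_smul (c : b → K) : T (∑ i, c i • (i : V)) = ∑ i, τ (c i) • (i : V) := by
    simp only [map_sum, map_smulₛₗ]
    exact Finset.sum_congr rfl fun i _ => by rw [hbT i.2]
  have hrange : Set.range Ψ = {v | T v = v} := by
    ext u
    constructor
    · rintro ⟨c, rfl⟩
      exact (map_sum_smul _).trans (Finset.sum_congr rfl fun i _ => by rw [(c i).2])
    · intro hu
      have hu' : u ∈ span K (Set.range ((↑) : b → V)) := by
        rw [Subtype.range_coe, hbspan]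
        exact subset_span hu
      obtain ⟨c, rfl⟩ := (mem_span_range_iff_exists_fun K).mp hu'
      have hc := Fintype.linearIndependent_iffₛ.mp hbli _ _ ((map_sum_smul c).symm.trans hu)
      exact ⟨fun i => ⟨c i, hc i⟩, rfl⟩
  rw [← hbspan]
  nth_rw 1 [← hrange]
  rw [← Nat.card_coe_set_eq, Nat.card_range_of_injective hΨ, Nat.card_fun,
    Nat.card_coe_set_eq, finrank_span_set_eq_card hbli, Nat.card_eq_fintype_card,
    Set.toFinset_card]

end SemilinearFixedPoints

namespace Matrix

variable {R : Type*} [CommRing R] {ι : Type*} [Fintype ι]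

def vecMulₛₗ (τ : R →+* R) (A : Matrix ι ι R) : (ι → R) →ₛₗ[τ] (ι → R) where
  toFun u := τ ∘ (u ᵥ* A)
  map_add' u v := by ext; simp [add_vecMul]
  map_smul' c u := by ext; simp [smul_vecMul]

theorem iterate_vecMulₛₗ [DecidableEq ι] {τ φ : R →+* R} (hτφ : LeftInverse τ φ)
    (A : Matrix ι ι R) (i : ℕ) (u : ι → R) :
    (vecMulₛₗ τ A)^[i] u =
      ⇑(τ ^ i) ∘ (u ᵥ* ((List.range i).map fun l => A.map ⇑(φ ^ l)).prod) := by
  induction i with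
  | zero => ext; simp
  | succ i ih =>
    have hcomp (v : ι → R) :
        (⇑(τ ^ i) ∘ v) ᵥ* A = ⇑(τ ^ i) ∘ (v ᵥ* A.map ⇑(φ ^ i)) := by
      have hmap : (A.map ⇑(φ ^ i)).map ⇑(τ ^ i) = A := by
        ext; simpa using (hτφ.iterate i) _
      ext j
      rw [Function.comp_apply, RingHom.map_vecMul, hmap]
    rw [iterate_succ_apply', ih, List.range_succ, List.map_append, List.prod_append,
      List.map_singleton, List.prod_singleton, ← vecMul_vecMul, pow_succ', RingHom.coe_mul]
    simp only [vecMulₛₗ, LinearMap.coe_mk, AddHom.coe_mk, hcomp]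
    rfl

theorem eq_one_of_vecMul_eq_self {K : Type*} [Field K] [DecidableEq ι] {P : Matrix ι ι K}
    {S : Set (ι → K)} (hS : span K S = ⊤) (h : ∀ u ∈ S, u ᵥ* P = u) : P = 1 := by
  have hP : vecMulLinear P = LinearMap.id := LinearMap.ext_on hS h
  ext i j
  simpa [single_one_vecMul, one_apply, Pi.single_apply, eq_comm] using
    congrFun (LinearMap.congr_fun hP (Pi.single i 1)) j

theorem setOf_vecMulₛₗ_apply_eq_self {τ φ : R →+* R} (hτφ : LeftInverse τ φ)
    (hφτ : LeftInverse φ τ) (A : Matrix ι ι R) :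
    {u | vecMulₛₗ τ A u = u} = {u | ∀ j, φ (u j) = (u ᵥ* A) j} := by
  ext u
  simp only [vecMulₛₗ, LinearMap.coe_mk, AddHom.coe_mk, funext_iff, Function.comp_apply,
    Set.mem_ofPred_eq]
  refine forall_congr' fun j => ⟨fun h => ?_, fun h => ?_⟩
  · rw [← h, hφτ]
  · rw [← h, hτφ]

def companion {k : ℕ} (a : Fin k → R) : Matrix (Fin k) (Fin k) R :=
  of fun i j => if (i : ℕ) = (j : ℕ) + 1 then 1 else if (j : ℕ) = k - 1 then a i else 0

variable {k : ℕ} (a : Fin k → R) (u : Fin k → R)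

theorem vecMul_companion_of_lt (j : Fin k) (hj : (j : ℕ) + 1 < k) :
    (u ᵥ* companion a) j = u ⟨j + 1, hj⟩ := by
  rw [vecMul, dotProduct, Finset.sum_eq_single ⟨j + 1, hj⟩]
  · simp [companion]
  · intro i _ hi
    have : (i : ℕ) ≠ j + 1 := fun h => hi (Fin.ext h)
    simp [companion, this, show (j : ℕ) ≠ k - 1 by omega]
  · simp

theorem vecMul_companion_of_eq (j : Fin k) (hj : (j : ℕ) = k - 1) :
    (u ᵥ* companion a) j = ∑ i, u i * a i := by
  simp only [vecMul, dotProduct]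
  refine Finset.sum_congr rfl fun i _ => ?_
  simp [companion, hj, show (i : ℕ) ≠ k - 1 + 1 by omega]

theorem setOf_apply_eq_vecMul_companion (φ : R → R) (hk : 0 < k) :
    {u : Fin k → R | ∀ j, φ (u j) = (u ᵥ* companion a) j} =
      (fun x (j : Fin k) => φ^[j] x) '' {x | ∑ i, a i * φ^[i] x = φ^[k] x} := by
  ext u
  constructor
  · intro hu
    have hpow : ∀ m (hm : m < k), u ⟨m, hm⟩ = φ^[m] (u ⟨0, hk⟩) := by
      intro m hm
      induction m with
      | zero => rfl
      | succ m ih =>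
        rw [iterate_succ_apply', ← ih (by omega), hu,
          vecMul_companion_of_lt a u ⟨m, by omega⟩ hm]
    refine ⟨u ⟨0, hk⟩, ?_, funext fun j => (hpow j j.2).symm⟩
    have hlast := hu ⟨k - 1, by omega⟩
    rw [vecMul_companion_of_eq a u _ rfl, hpow _ (by omega), ← iterate_succ_apply' φ,
      Nat.succ_eq_add_one, Nat.sub_add_cancel hk] at hlast
    rw [Set.mem_ofPred_eq, hlast]
    exact Finset.sum_congr rfl fun i _ => by rw [hpow i i.2, mul_comm]
  · rintro ⟨x, hx, rfl⟩ j
    rw [← iterate_succ_apply' φ]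
    by_cases hj : (j : ℕ) + 1 < k
    · rw [vecMul_companion_of_lt a _ j hj]
    · rw [vecMul_companion_of_eq a _ j (by omega), show (j : ℕ).succ = k by omega, ← hx]
      exact Finset.sum_congr rfl fun i _ => mul_comm _ _

end Matrix

theorem Function.IsPeriodicPt.isFixedPt_of_coprime {α : Type*} {f : α → α} {x : α} {m n : ℕ}
    (hm : IsPeriodicPt f m x) (hn : IsPeriodicPt f n x) (hmn : m.Coprime n) : IsFixedPt f x :=
  (hmn.gcd_eq_one ▸ hm.gcd hn : IsPeriodicPt f 1 x)

section FiniteField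

variable {L : Type*} [Field L] [Fintype L] {q n : ℕ}

theorem one_lt_of_card_eq_pow (hL : Fintype.card L = q ^ n) : 1 < q := by
  by_contra! hq
  exact absurd (Nat.pow_le_pow_left hq n) (by simpa [← hL] using Fintype.one_lt_card)

theorem ne_zero_of_card_eq_pow (hL : Fintype.card L = q ^ n) : n ≠ 0 := by
  rintro rfl
  exact absurd hL (by simpa using Fintype.one_lt_card.ne')

theorem exists_ringHom_eq_pow_of_card_eq_pow (hL : Fintype.card L = q ^ n) :
    ∃ ρ : L →+* L, ⇑ρ = fun x => x ^ q := by
  obtain ⟨p, hchar, N, hp, hcard⟩ := FiniteField.card' L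
  have hq : q ∣ p ^ (N : ℕ) := hcard ▸ hL ▸ dvd_pow_self q (ne_zero_of_card_eq_pow hL)
  obtain ⟨e, -, rfl⟩ := (Nat.dvd_prime_pow hp).mp hq
  have : Fact p.Prime := ⟨hp⟩
  exact ⟨iterateFrobenius L p e, rfl⟩

theorem ncard_setOf_pow_pow_eq_self (hL : Fintype.card L = q ^ n) {d : ℕ} (hd : d ∣ n)
    (hd0 : d ≠ 0) : {c : L | c ^ q ^ d = c}.ncard = q ^ d := by
  classical
  have hq := one_lt_of_card_eq_pow hL
  set g : L[X] := X ^ q ^ d - X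
  obtain ⟨r, hr⟩ : g ∣ X ^ q ^ n - X := dvd_pow_pow_sub_self_of_dvd hd
  have hgdeg : g.natDegree = q ^ d := FiniteField.X_pow_card_pow_sub_X_natDegree_eq L hd0 hq
  have hh0 : g * r ≠ 0 :=
    hr ▸ FiniteField.X_pow_card_pow_sub_X_ne_zero L (ne_zero_of_card_eq_pow hL) hq
  have hdeg : q ^ n = q ^ d + r.natDegree := by
    rw [← hgdeg, ← natDegree_mul (left_ne_zero_of_mul hh0) (right_ne_zero_of_mul hh0), ← hr,
      FiniteField.X_pow_card_pow_sub_X_natDegree_eq L (ne_zero_of_card_eq_pow hL) hq]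
  have hroots : g.roots + r.roots = Finset.univ.val := by
    rw [← roots_mul hh0, ← hr, ← hL, FiniteField.roots_X_pow_card_sub_X]
  have hcard := congrArg Multiset.card hroots
  rw [Multiset.card_add, Finset.card_val, Finset.card_univ, hL] at hcard
  have hg := hgdeg ▸ card_roots' g
  have hr' := card_roots' r
  have hnodup : g.roots.Nodup :=
    Multiset.nodup_of_le (hroots ▸ Multiset.le_add_right _ _) Finset.univ.nodup
  have hset : {c : L | c ^ q ^ d = c} = ↑g.roots.toFinset := by
    ext c
    simp [g, mem_roots (left_ne_zero_of_mul hh0), sub_eq_zero]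
  rw [hset, Set.ncard_coe_finset, Multiset.toFinset_card_of_nodup hnodup]
  omega

variable {ρ : L →+* L}

theorem isPeriodicPt_of_card_eq_pow (hρ : ⇑ρ = fun x => x ^ q) (hL : Fintype.card L = q ^ n)
    (x : L) : IsPeriodicPt ρ n x := by
  rw [IsPeriodicPt, IsFixedPt, hρ, pow_iterate, ← hL]
  exact FiniteField.pow_card x

theorem pow_apply_of_dvd (hρ : ⇑ρ = fun x => x ^ q) (hL : Fintype.card L = q ^ n) {m : ℕ}
    (hm : n ∣ m) (x : L) : (ρ ^ m) x = x := by
  obtain ⟨c, rfl⟩ := hm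
  rw [RingHom.coe_pow]
  exact (isPeriodicPt_of_card_eq_pow hρ hL x).mul_const c

theorem modEq_of_iterate_eq (hρ : ⇑ρ = fun x => x ^ q) (hL : Fintype.card L = q ^ n)
    {a b : ℕ} (h : ρ^[a] = ρ^[b]) : a ≡ b [MOD n] := by
  wlog hab : a ≤ b
  · exact (this hρ hL h.symm (le_of_not_ge hab)).symm
  have hper (x : L) : IsPeriodicPt ρ (b - a) x := by
    obtain ⟨y, rfl⟩ := (ρ.injective.bijective_of_finite.iterate a).2 x
    rw [IsPeriodicPt, IsFixedPt, ← iterate_add_apply, Nat.sub_add_cancel hab, ← h]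
  set g := (b - a).gcd n
  have hfix (x : L) : x ^ q ^ g = x := by
    simpa [IsPeriodicPt, IsFixedPt, hρ, pow_iterate] using
      (hper x).gcd (isPeriodicPt_of_card_eq_pow hρ hL x)
  have hg : q ^ g = q ^ n := by
    have huniv : {c : L | c ^ q ^ g = c} = Set.univ := Set.eq_univ_of_forall hfix
    rw [← ncard_setOf_pow_pow_eq_self hL (Nat.gcd_dvd_right _ _)
      (Nat.gcd_ne_zero_right (ne_zero_of_card_eq_pow hL)), ← hL, huniv, Set.ncard_univ,
      Nat.card_eq_fintype_card]
  have hgn : g = n := Nat.pow_right_injective (one_lt_of_card_eq_pow hL) hg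
  exact (Nat.modEq_iff_dvd' hab).mpr (hgn ▸ Nat.gcd_dvd_left _ _)

theorem injective_iterate_pow_of_coprime (hρ : ⇑ρ = fun x => x ^ q)
    (hL : Fintype.card L = q ^ n) {t : ℕ} (ht : t.Coprime n) :
    Injective fun i : Fin n => (⇑(ρ ^ t))^[i] := by
  intro i j hij
  simp only [RingHom.coe_pow, ← iterate_mul] at hij
  have hij' := Nat.ModEq.cancel_left_of_coprime (by rwa [Nat.gcd_comm])
    (modEq_of_iterate_eq hρ hL hij)
  exact Fin.ext (hij'.eq_of_lt_of_lt i.2 j.2)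

theorem ncard_setOf_pow_apply_eq_self (hρ : ⇑ρ = fun x => x ^ q)
    (hL : Fintype.card L = q ^ n) {t : ℕ} (ht : t.Coprime n) :
    {c : L | (ρ ^ t) c = c}.ncard = q := by
  have hset : {c : L | (ρ ^ t) c = c} = {c | c ^ q ^ 1 = c} := by
    ext c
    refine ⟨fun h => ?_, fun h => ?_⟩
    · rw [RingHom.coe_pow] at h
      simpa [IsFixedPt, hρ] using
        IsPeriodicPt.isFixedPt_of_coprime h (isPeriodicPt_of_card_eq_pow hρ hL c) ht
    · have hc : IsFixedPt ρ c := by simpa [IsFixedPt, hρ] using h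
      rw [Set.mem_ofPred_eq, RingHom.coe_pow]
      exact hc.iterate t
  rw [hset, ncard_setOf_pow_pow_eq_self hL (one_dvd n) one_ne_zero, pow_one]

theorem ncard_setOf_pow_eq_vecMul_eq_pow_iff {ι : Type*} [Fintype ι] [DecidableEq ι]
    (hL : Fintype.card L = q ^ n) {s : ℕ} (hs : s.Coprime n) (A : Matrix ι ι L) :
    {u : ι → L | ∀ j, u j ^ q ^ s = (u ᵥ* A) j}.ncard = q ^ Fintype.card ι ↔
      ((List.range n).map fun i => A.map fun y => y ^ q ^ (s * i)).prod = 1 := by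
  obtain ⟨ρ, hρ⟩ := exists_ringHom_eq_pow_of_card_eq_pow hL
  have hρpow (m : ℕ) : ⇑(ρ ^ m) = fun x => x ^ q ^ m := by
    rw [RingHom.coe_pow, hρ, pow_iterate]
  obtain ⟨m, rfl⟩ := Nat.exists_eq_add_one_of_ne_zero (ne_zero_of_card_eq_pow hL)
  have hτφ : LeftInverse ⇑(ρ ^ (s * m)) ⇑(ρ ^ s) := fun x => by
    change (ρ ^ (s * m) * ρ ^ s) x = x
    rw [← pow_add]
    exact pow_apply_of_dvd hρ hL ⟨s, by ring⟩ x
  have hφτ : LeftInverse ⇑(ρ ^ s) ⇑(ρ ^ (s * m)) := fun x => by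
    change (ρ ^ s * ρ ^ (s * m)) x = x
    rw [← pow_add]
    exact pow_apply_of_dvd hρ hL ⟨s, by ring⟩ x
  have ht : (s * m).Coprime (m + 1) := hs.mul_left (by simp)
  set T := vecMulₛₗ (ρ ^ (s * m)) A
  have hTn (u : ι → L) : T^[m + 1] u = u ᵥ* ((List.range (m + 1)).map
      fun i => A.map fun y => y ^ q ^ (s * i)).prod := by
    have hτn : ⇑((ρ ^ (s * m)) ^ (m + 1)) = id := funext fun x => by
      rw [← pow_mul]; exact pow_apply_of_dvd hρ hL ⟨s * m, by ring⟩ x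
    rw [iterate_vecMulₛₗ hτφ, hτn, id_comp]
    simp only [← pow_mul, hρpow]
  have hfix : {u : ι → L | ∀ j, u j ^ q ^ s = (u ᵥ* A) j} = {u | T u = u} := by
    rw [setOf_vecMulₛₗ_apply_eq_self hτφ hφτ, hρpow]
  rw [hfix, ncard_setOf_apply_eq_self T, ncard_setOf_pow_apply_eq_self hρ hL ht,
    (Nat.pow_right_injective (one_lt_of_card_eq_pow hL)).eq_iff, ← finrank_pi L,
    ← eq_top_iff_finrank_eq]
  constructor
  · intro htop
    refine eq_one_of_vecMul_eq_self htop fun u hu => ?_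
    rw [← hTn]
    exact IsFixedPt.iterate hu (m + 1)
  · intro hP
    refine span_setOf_apply_eq_self_eq_top T m.succ_pos (funext fun u => ?_)
      (injective_iterate_pow_of_coprime hρ hL ht)
    rw [hTn, hP, vecMul_one, id]

end FiniteField

theorem stmt2_general (q n k s : ℕ) (hk : 0 < k)
    (hs : Nat.gcd s n = 1)
    (L : Type*) [Field L] [Fintype L] (hL : Fintype.card L = q ^ n)
    (a : Fin k → L)
    (A : Matrix (Fin k) (Fin k) L)
    (hA : A = Matrix.of fun i j : Fin k =>
      if (i : ℕ) = (j : ℕ) + 1 then 1 else if (j : ℕ) = k - 1 then a i else 0) :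
    Set.ncard {x : L | (∑ i : Fin k, a i * x ^ q ^ (s * (i : ℕ))) - x ^ q ^ (s * k) = 0} = q ^ k
      ↔ ((List.range n).map (fun i => A.map (fun y => y ^ q ^ (s * i)))).prod = 1 := by
  have hroots : {x : L | (∑ i : Fin k, a i * x ^ q ^ (s * (i : ℕ))) - x ^ q ^ (s * k) = 0} =
      {x | ∑ i : Fin k, a i * (fun y => y ^ q ^ s)^[i] x = (fun y => y ^ q ^ s)^[k] x} := by
    simp only [pow_iterate, ← pow_mul, sub_eq_zero]
  have hcount := ncard_setOf_pow_eq_vecMul_eq_pow_iff hL hs A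
  rw [Fintype.card_fin] at hcount
  rw [hroots, ← Set.ncard_image_of_injective _
      (f := fun x (j : Fin k) => (fun y => y ^ q ^ s)^[j] x) (fun x y h => congrFun h ⟨0, hk⟩),
    ← setOf_apply_eq_vecMul_companion _ _ hk, ← show A = companion a from hA]
  exact hcount

/-- Main theorem. For `σ = q^s` with `gcd(s,n) = 1`, the `σ`-polynomial
`f(x) = a_0 x + ... + a_{k-1} x^{σ^{k-1}} - x^{σ^k}` over `F_{q^n}` has exactly `q^k`
roots in `F_{q^n}` (maximum kernel) if and only if `A · A^σ · ... · A^{σ^{n-1}} = I_k`,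
where `A` is the companion-type matrix of `f`. -/
theorem stmt2 (q n k s : ℕ) (hq : IsPrimePow q) (hn : 0 < n) (hk : 0 < k) (hkn : k ≤ n)
    (hs : Nat.gcd s n = 1)
    (L : Type*) [Field L] [Fintype L] (hL : Fintype.card L = q ^ n)
    (a : Fin k → L)
    (A : Matrix (Fin k) (Fin k) L)
    (hA : A = Matrix.of fun i j : Fin k =>
      if (i : ℕ) = (j : ℕ) + 1 then 1 else if (j : ℕ) = k - 1 then a i else 0) :
    Set.ncard {x : L | (∑ i : Fin k, a i * x ^ q ^ (s * (i : ℕ))) - x ^ q ^ (s * k) = 0} = q ^ k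
      ↔ ((List.range n).map (fun i => A.map (fun y => y ^ q ^ (s * i)))).prod = 1 :=
  stmt2_general q n k s hk hs L hL a A hA
end

section
/- Let A be the k×k matrix over F_{q^n} with subdiagonal entries 1, last column (a_0,...,a_{k-1})^T with a_0 ≠ 0, and zeros elsewhere, and let σ = q^s with gcd(s,n)=1. Then A·A^σ·...·A^{σ^{n-1}} = I_k if and only if A·A^σ·...·A^{σ^{n-1}} fixes the standard basis vector e_0 = (1,0,...,0)^T. -/
/-! Let `φ x = x ^ q ^ s`. Since `x ^ q ^ n = x` on `L`, the factors of `B` satisfy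
`A^{σ^n} = A`, and shifting the product by one factor gives `B * A = A * φ(B)`. The matrix `A`
sends `e_j` to `e_{j+1}` for `j + 1 < k`, so if `B` fixes `e_j` then so does `φ(B)`, and
`B e_{j+1} = B A e_j = A φ(B) e_j = A e_j = e_{j+1}`. By induction `B` fixes every `e_j`. -/

open Matrix

theorem List.prod_map_range_mul_eq_mul_apply_prod {M : Type*} [Monoid M] (ψ : M →* M)
    (f : ℕ → M) (n : ℕ) (hf : ∀ i, f (i + 1) = ψ (f i)) (hn : f n = f 0) :
    ((List.range n).map f).prod * f 0 = f 0 * ψ ((List.range n).map f).prod := by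
  rw [← hn, ← List.prod_range_succ, List.prod_range_succ', hn, map_list_prod, List.map_map]
  simp only [hf, Function.comp_def]

theorem Matrix.map_mulVec_single_one_of_mulVec_single_one {m R : Type*} [Fintype m]
    [DecidableEq m] [Semiring R] (φ : R →+* R) {M : Matrix m m R} {j : m}
    (hM : M *ᵥ Pi.single j 1 = Pi.single j 1) :
    M.map φ *ᵥ Pi.single j 1 = Pi.single j 1 := by
  rw [mulVec_single_one] at hM ⊢
  rw [col_map, hM]
  ext i
  rcases eq_or_ne i j with rfl | hij <;> simp [*]

theorem Matrix.eq_one_of_mul_eq_mul_map {R : Type*} [Semiring R] {k : ℕ} (hk : 0 < k)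
    (φ : R →+* R) {A M : Matrix (Fin k) (Fin k) R}
    (hA : ∀ j (hj : j + 1 < k), A *ᵥ Pi.single ⟨j, by omega⟩ 1 = Pi.single ⟨j + 1, hj⟩ 1)
    (hMA : M * A = A * M.map φ) (hM : M *ᵥ Pi.single ⟨0, hk⟩ 1 = Pi.single ⟨0, hk⟩ 1) :
    M = 1 := by
  have fixes : ∀ j (hj : j < k), M *ᵥ Pi.single ⟨j, hj⟩ 1 = Pi.single ⟨j, hj⟩ 1 := by
    intro j
    induction j with
    | zero => exact fun _ => hM
    | succ j ih =>
      intro hj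
      calc M *ᵥ Pi.single ⟨j + 1, hj⟩ 1
          = (M * A) *ᵥ Pi.single ⟨j, by omega⟩ 1 := by rw [← mulVec_mulVec, hA j hj]
        _ = Pi.single ⟨j + 1, hj⟩ 1 := by
          rw [hMA, ← mulVec_mulVec,
            map_mulVec_single_one_of_mulVec_single_one φ (ih (by omega)), hA j hj]
  refine ext_col fun j => ?_
  rw [← mulVec_single_one, ← mulVec_single_one, one_mulVec]
  exact fixes j j.isLt

theorem Matrix.of_subdiagonal_mulVec_single {R : Type*} [Semiring R] {k : ℕ} (a : Fin k → R)
    {j : ℕ} (hj : j + 1 < k) :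
    (of fun i j : Fin k => if (i : ℕ) = (j : ℕ) + 1 then 1 else if (j : ℕ) = k - 1 then a i else 0)
      *ᵥ Pi.single ⟨j, by omega⟩ 1 = Pi.single ⟨j + 1, hj⟩ 1 := by
  ext i
  simp only [mulVec_single_one, col_apply, of_apply, Pi.single_apply, Fin.ext_iff]
  split_ifs <;> first | rfl | omega

theorem FiniteField.exists_ringHom_apply_eq_pow_pow {L : Type*} [Field L] [Fintype L] {q n : ℕ}
    (hq : IsPrimePow q) (hL : Fintype.card L = q ^ n) (s : ℕ) :
    ∃ φ : L →+* L, ∀ x, φ x = x ^ q ^ s := by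
  obtain ⟨p, m, hp, -, rfl⟩ := hq
  have : Fact p.Prime := ⟨hp.nat_prime⟩
  have : CharP L p := charP_of_card_eq_prime_pow (hL.trans (pow_mul p m n).symm)
  exact ⟨iterateFrobenius L p (m * s), fun x => by rw [iterateFrobenius_def, pow_mul]⟩

theorem stmt5_general (q n k s : ℕ) (hq : IsPrimePow q) (hk : 0 < k)
    (L : Type*) [Field L] [Fintype L] (hL : Fintype.card L = q ^ n)
    (a : Fin k → L)
    (A : Matrix (Fin k) (Fin k) L)
    (hA : A = Matrix.of fun i j : Fin k =>
      if (i : ℕ) = (j : ℕ) + 1 then 1 else if (j : ℕ) = k - 1 then a i else 0)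
    (B : Matrix (Fin k) (Fin k) L)
    (hB : B = ((List.range n).map (fun i => A.map (fun y => y ^ q ^ (s * i)))).prod) :
    B = 1 ↔ B.mulVec (Pi.single ⟨0, hk⟩ 1) = Pi.single ⟨0, hk⟩ 1 := by
  refine ⟨fun h => by rw [h, one_mulVec], fun h => ?_⟩
  obtain ⟨φ, hφ⟩ := FiniteField.exists_ringHom_apply_eq_pow_pow hq hL s
  have hBA : B * A = A * B.map φ := by
    have := List.prod_map_range_mul_eq_mul_apply_prod
      (RingHom.mapMatrix (m := Fin k) φ).toMonoidHom (fun i => A.map (fun y => y ^ q ^ (s * i))) n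
      (fun i => by ext; simp [hφ, ← pow_mul, mul_add, pow_add])
      (by ext; simp [mul_comm s n, pow_mul, ← hL, FiniteField.pow_card_pow])
    simpa [← hB] using this
  subst hA
  exact eq_one_of_mul_eq_mul_map hk φ (fun j hj => of_subdiagonal_mulVec_single a hj) hBA h

/-- With `A` the companion-type matrix (subdiagonal `1`s, last column
`(a_0, ..., a_{k-1})^T`, `a_0 ≠ 0`) and `σ = q^s`, `gcd(s,n) = 1`, one has
`A·A^σ·...·A^{σ^{n-1}} = I_k` iff this product fixes `e_0 = (1,0,...,0)^T`. -/
theorem stmt5 (q n k s : ℕ) (hq : IsPrimePow q) (hn : 0 < n) (hk : 0 < k)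
    (hs : Nat.gcd s n = 1)
    (L : Type*) [Field L] [Fintype L] (hL : Fintype.card L = q ^ n)
    (a : Fin k → L) (ha0 : a ⟨0, hk⟩ ≠ 0)
    (A : Matrix (Fin k) (Fin k) L)
    (hA : A = Matrix.of fun i j : Fin k =>
      if (i : ℕ) = (j : ℕ) + 1 then 1 else if (j : ℕ) = k - 1 then a i else 0)
    (B : Matrix (Fin k) (Fin k) L)
    (hB : B = ((List.range n).map (fun i => A.map (fun y => y ^ q ^ (s * i)))).prod) :
    B = 1 ↔ B.mulVec (Pi.single ⟨0, hk⟩ 1) = Pi.single ⟨0, hk⟩ 1 :=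
  stmt5_general q n k s hq hk L hL a A hA B hB
end

section
/- A q-polynomial f(x) over F_{q^n} (of q-degree at most n-1) has kernel of F_q-dimension exactly n-1 if and only if there exist α, β ∈ F_{q^n}* such that f(x) = α·Tr_{q^n/q}(βx), where Tr_{q^n/q}(x) = x + x^q + ... + x^{q^{n-1}}. -/
/-!
Write `K = frobFixed q` (the copy of `F_q` in `L`) and `T = traceKer q n` (the kernel of the trace
`y ↦ ∑_{i<n} y ^ q ^ i`). The map `x ↦ x ^ q - x` has kernel `K` and image inside `T`; since
`|K| ≤ q` and `|T| ≤ q ^ (n - 1)` by counting roots of polynomials of these degrees, `|L| = q ^ n`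
forces both bounds to be equalities. This gives `←`, the kernel of `x ↦ α Tr (β x)` being `β⁻¹ T`.

For `→`, the q-polynomial `f` is `K`-linear with `|im f| = q ^ n / q ^ (n - 1) = |K|`, so
`im f = K α` for any nonzero value `α`: the q-polynomial `g = f / α`, with coefficients
`b i = a i / α`, satisfies `g ^ q = g`. Once `x ^ q ^ n = x` is used, both sides are q-polynomials
of degree `< q ^ n`, so comparing coefficients gives `b (i + 1) = b i ^ q`, that is,
`a i = α (a 0 / α) ^ q ^ i`.
-/

open Polynomial Finset

lemma AddMonoidHom.ncard_ker_mul_ncard_range {G H : Type*} [AddGroup G] [AddGroup H] [Finite G]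
    (f : G →+ H) : (f.ker : Set G).ncard * (Set.range f).ncard = Nat.card G := by
  rw [← AddMonoidHom.coe_range, ← Nat.card_coe_set_eq, ← Nat.card_coe_set_eq]
  exact AddSubgroup.index_ker f ▸ f.ker.card_mul_index

lemma Polynomial.ncard_setOf_eval_eq_zero_le {R : Type*} [CommRing R] [IsDomain R] {P : R[X]}
    (hP : P ≠ 0) : {x | P.eval x = 0}.ncard ≤ P.natDegree := by
  convert P.ncard_rootSet_le R using 2
  ext x
  simp [mem_rootSet, hP]

lemma exists_mem_eq_mul_of_ncard_range_le {M : Type*} [MulZeroClass M] [IsRightCancelMulZero M]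
    [Finite M] {K : Set M} {f : M → M} (hf : ∀ c ∈ K, ∀ x, f (c * x) = c * f x)
    (hcard : (Set.range f).ncard ≤ K.ncard) {x₀ : M} (hx₀ : f x₀ ≠ 0) (x : M) :
    ∃ c ∈ K, f x = c * f x₀ := by
  have hsub : (· * f x₀) '' K ⊆ Set.range f := by
    rintro - ⟨c, hc, rfl⟩
    exact ⟨c * x₀, hf c hc x₀⟩
  have hrange := Set.eq_of_subset_of_ncard_le hsub
    (by rwa [Set.ncard_image_of_injective K (mul_left_injective₀ hx₀)])
  obtain ⟨c, hc, hcx⟩ := hrange.symm.subset (Set.mem_range_self x)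
  exact ⟨c, hc, hcx.symm⟩

namespace QPolynomial

variable {L : Type*} [Field L] {q : ℕ}

def powRingHom (hfrob : ∀ x y : L, (x + y) ^ q = x ^ q + y ^ q) : L →+* L where
  toFun x := x ^ q
  map_one' := one_pow q
  map_mul' x y := mul_pow x y q
  map_zero' := by simpa using hfrob 0 0
  map_add' := hfrob

@[simp]
lemma powRingHom_apply (hfrob : ∀ x y : L, (x + y) ^ q = x ^ q + y ^ q) (x : L) :
    powRingHom hfrob x = x ^ q := rfl

lemma powRingHom_pow_apply (hfrob : ∀ x y : L, (x + y) ^ q = x ^ q + y ^ q) (i : ℕ) (x : L) :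
    (powRingHom hfrob ^ i) x = x ^ q ^ i := by
  induction i with
  | zero => simp
  | succ i ih =>
    rw [pow_succ', RingHom.mul_def, RingHom.comp_apply, ih, pow_succ, pow_mul]
    rfl

noncomputable def qPolyHom (hfrob : ∀ x y : L, (x + y) ^ q = x ^ q + y ^ q) (n : ℕ)
    (a : ℕ → L) : L →+ L :=
  AddMonoidHom.mk' (fun x ↦ ∑ i ∈ range n, a i * x ^ q ^ i) fun x y ↦ by
    simp only [← powRingHom_pow_apply hfrob, map_add, mul_add, sum_add_distrib]

@[simp]
lemma qPolyHom_apply (hfrob : ∀ x y : L, (x + y) ^ q = x ^ q + y ^ q) (n : ℕ) (a : ℕ → L)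
    (x : L) : qPolyHom hfrob n a x = ∑ i ∈ range n, a i * x ^ q ^ i := rfl

def frobFixed (q : ℕ) : Set L := {c | c ^ q = c}

def traceKer (q n : ℕ) : Set L := {y | ∑ i ∈ range n, y ^ q ^ i = 0}

lemma pow_pow_eq_self_of_mem_frobFixed {c : L} (hc : c ∈ frobFixed q) (i : ℕ) :
    c ^ q ^ i = c := by
  induction i with
  | zero => simp
  | succ i ih => rw [pow_succ, pow_mul, ih]; exact hc

lemma qPolyHom_mul_of_mem_frobFixed (hfrob : ∀ x y : L, (x + y) ^ q = x ^ q + y ^ q) (n : ℕ)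
    (a : ℕ → L) {c : L} (hc : c ∈ frobFixed q) (x : L) :
    qPolyHom hfrob n a (c * x) = c * qPolyHom hfrob n a x := by
  simp only [qPolyHom_apply, mul_sum, mul_pow, pow_pow_eq_self_of_mem_frobFixed hc]
  exact sum_congr rfl fun i _ ↦ by ring

noncomputable def qPoly (q n : ℕ) (a : ℕ → L) : L[X] := ∑ i ∈ range n, C (a i) * X ^ q ^ i

@[simp]
lemma eval_qPoly (n : ℕ) (a : ℕ → L) (x : L) :
    (qPoly q n a).eval x = ∑ i ∈ range n, a i * x ^ q ^ i := by
  simp [qPoly, eval_finsetSum]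

lemma coeff_qPoly_pow (hq : 1 < q) {n j : ℕ} (hj : j < n) (a : ℕ → L) :
    (qPoly q n a).coeff (q ^ j) = a j := by
  rw [qPoly, finsetSum_coeff, sum_eq_single_of_mem j (mem_range.mpr hj)]
  · simp
  · intro i _ hij
    simp [coeff_X_pow, (Nat.pow_right_injective hq).ne hij.symm]

lemma natDegree_qPoly_le (hq : 0 < q) (n : ℕ) (a : ℕ → L) :
    (qPoly q n a).natDegree ≤ q ^ (n - 1) := by
  refine natDegree_sum_le_of_forall_le _ _ fun i hi ↦ (natDegree_C_mul_X_pow_le _ _).trans ?_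
  exact Nat.pow_le_pow_right hq (Nat.le_sub_one_of_lt (mem_range.mp hi))

lemma coeff_eq_zero_of_forall_sum_eq_zero [Fintype L] {n : ℕ} (hL : Fintype.card L = q ^ n)
    (hq : 1 < q) (hn : 0 < n) {a : ℕ → L} (h : ∀ x : L, ∑ i ∈ range n, a i * x ^ q ^ i = 0)
    {j : ℕ} (hj : j < n) : a j = 0 := by
  have hdeg : (qPoly q n a).natDegree < Fintype.card L :=
    (natDegree_qPoly_le hq.le n a).trans_lt (hL ▸ Nat.pow_lt_pow_right hq (by omega))
  have hzero : qPoly q n a = 0 :=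
    eq_zero_of_natDegree_lt_card_of_eval_eq_zero _ Function.injective_id (by simpa using h) hdeg
  rw [← coeff_qPoly_pow hq hj a, hzero, coeff_zero]

lemma ncard_frobFixed_le (hq : 1 < q) : (frobFixed q : Set L).ncard ≤ q := by
  convert ncard_setOf_eval_eq_zero_le (FiniteField.X_pow_card_sub_X_ne_zero L hq) using 1
  · congr 1
    ext x
    simp [frobFixed, sub_eq_zero]
  · rw [FiniteField.X_pow_card_sub_X_natDegree_eq L hq]

lemma ncard_traceKer_le (hq : 1 < q) {n : ℕ} (hn : 0 < n) :
    (traceKer q n : Set L).ncard ≤ q ^ (n - 1) := by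
  have hP : qPoly q n (fun _ ↦ (1 : L)) ≠ 0 := fun h ↦ by
    simpa [h] using coeff_qPoly_pow hq (Nat.sub_one_lt hn.ne') (fun _ ↦ (1 : L))
  have hset : (traceKer q n : Set L) = {x | (qPoly q n fun _ ↦ (1 : L)).eval x = 0} := by
    ext
    simp [traceKer]
  rw [hset]
  exact (ncard_setOf_eval_eq_zero_le hP).trans (natDegree_qPoly_le (by omega) n _)

lemma sum_pow_pow_sub_self_eq_zero (hfrob : ∀ x y : L, (x + y) ^ q = x ^ q + y ^ q) [Fintype L]
    {n : ℕ} (hL : Fintype.card L = q ^ n) (x : L) : ∑ i ∈ range n, (x ^ q - x) ^ q ^ i = 0 := by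
  simp_rw [← powRingHom_pow_apply hfrob, map_sub, powRingHom_pow_apply hfrob, ← pow_mul,
    ← pow_succ']
  have hx : x ^ q ^ n = x := hL ▸ FiniteField.pow_card x
  rw [sum_range_sub (fun i ↦ x ^ q ^ i), hx, pow_zero, pow_one, sub_self]

lemma ncard_frobFixed_eq_and_ncard_traceKer_eq (hfrob : ∀ x y : L, (x + y) ^ q = x ^ q + y ^ q)
    [Fintype L] {n : ℕ} (hL : Fintype.card L = q ^ n) (hq : 1 < q) (hn : 0 < n) :
    (frobFixed q : Set L).ncard = q ∧ (traceKer q n : Set L).ncard = q ^ (n - 1) := by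
  let φ : L →+ L := AddMonoidHom.mk' (fun x ↦ x ^ q - x) fun x y ↦ by rw [hfrob]; ring
  have hker : (φ.ker : Set L) = frobFixed q := by
    ext x
    simp [φ, frobFixed, sub_eq_zero]
  have hrange : Set.range φ ⊆ traceKer q n := by
    rintro - ⟨x, rfl⟩
    exact sum_pow_pow_sub_self_eq_zero hfrob hL x
  have hcard := φ.ncard_ker_mul_ncard_range
  rw [hker, Nat.card_eq_fintype_card, hL, ← mul_pow_sub_one hn.ne'] at hcard
  have hrange_pos : 0 < (Set.range φ).ncard := (Set.ncard_pos).mpr (Set.range_nonempty φ)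
  obtain ⟨hfix, hrange_card⟩ := (mul_eq_mul_iff_eq_and_eq_of_pos' (ncard_frobFixed_le hq)
    ((Set.ncard_le_ncard hrange).trans (ncard_traceKer_le hq hn)) (by omega) hrange_pos).mp hcard
  refine ⟨hfix, le_antisymm (ncard_traceKer_le hq hn) ?_⟩
  exact hrange_card ▸ Set.ncard_le_ncard hrange

lemma coeff_eq_pow_of_forall_pow_eq_self (hfrob : ∀ x y : L, (x + y) ^ q = x ^ q + y ^ q)
    [Fintype L] {n : ℕ} (hL : Fintype.card L = q ^ n) (hq : 1 < q) (hn : 0 < n) {b : ℕ → L}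
    (h : ∀ x : L, (∑ i ∈ range n, b i * x ^ q ^ i) ^ q = ∑ i ∈ range n, b i * x ^ q ^ i) :
    ∀ i < n, b i = b 0 ^ q ^ i := by
  obtain ⟨m, rfl⟩ : ∃ m, n = m + 1 := ⟨n - 1, by omega⟩
  have hshift : ∀ i < m, b (i + 1) = b i ^ q := by
    -- the coefficients of `g - g ^ q`, where `x ^ q ^ n = x` moves the top term of `g ^ q` to `x`
    let d : ℕ → L := fun i ↦ b i - if i = 0 then b m ^ q else b (i - 1) ^ q
    have hd : ∀ x : L, ∑ i ∈ range (m + 1), d i * x ^ q ^ i = 0 := by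
      intro x
      have hx : x ^ q ^ (m + 1) = x := hL ▸ FiniteField.pow_card x
      have hfrobSum : (∑ i ∈ range (m + 1), b i * x ^ q ^ i) ^ q
          = ∑ i ∈ range (m + 1), b i ^ q * x ^ q ^ (i + 1) := by
        rw [← powRingHom_apply hfrob, map_sum]
        simp only [powRingHom_apply, mul_pow, ← pow_mul, ← pow_succ]
      calc ∑ i ∈ range (m + 1), d i * x ^ q ^ i
          = (∑ i ∈ range m, b (i + 1) * x ^ q ^ (i + 1) + b 0 * x)
            - (∑ i ∈ range m, b i ^ q * x ^ q ^ (i + 1) + b m ^ q * x) := by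
            simp [d, sum_range_succ', sub_mul, sum_sub_distrib]
        _ = (∑ i ∈ range (m + 1), b i * x ^ q ^ i)
            - (∑ i ∈ range (m + 1), b i * x ^ q ^ i) ^ q := by
            rw [hfrobSum, sum_range_succ' (fun i ↦ b i * x ^ q ^ i),
              sum_range_succ (fun i ↦ b i ^ q * x ^ q ^ (i + 1)), hx, pow_zero, pow_one]
        _ = 0 := by rw [h x, sub_self]
    intro i hi
    simpa [d, sub_eq_zero] using
      coeff_eq_zero_of_forall_sum_eq_zero hL hq hn hd (j := i + 1) (by omega)
  intro i hi
  induction i with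
  | zero => simp
  | succ i ih => rw [hshift i (by omega), ih (by omega), ← pow_mul, ← pow_succ]

lemma exists_coeff_eq_mul_pow_of_ncard_eq (hfrob : ∀ x y : L, (x + y) ^ q = x ^ q + y ^ q)
    [Fintype L] {n : ℕ} (hL : Fintype.card L = q ^ n) (hq : 1 < q) (hn : 0 < n) {a : ℕ → L}
    (hker : {x : L | ∑ i ∈ range n, a i * x ^ q ^ i = 0}.ncard = q ^ (n - 1)) :
    ∃ α β : L, α ≠ 0 ∧ β ≠ 0 ∧ ∀ i < n, a i = α * β ^ q ^ i := by
  set f := qPolyHom hfrob n a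
  have hrange : (Set.range f).ncard = q := by
    have hcard := f.ncard_ker_mul_ncard_range
    rw [show (f.ker : Set L) = {x | ∑ i ∈ range n, a i * x ^ q ^ i = 0} from rfl, hker,
      Nat.card_eq_fintype_card, hL, ← pow_sub_one_mul hn.ne'] at hcard
    exact Nat.eq_of_mul_eq_mul_left (pow_pos (by omega) _) hcard
  obtain ⟨x₀, hx₀⟩ : ∃ x₀, f x₀ ≠ 0 := by
    by_contra! hf
    have hzero : Set.range f ⊆ {0} := by
      rintro - ⟨x, rfl⟩
      exact hf x
    have := Set.ncard_le_ncard hzero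
    rw [Set.ncard_singleton] at this
    omega
  set α := f x₀
  have hfix := (ncard_frobFixed_eq_and_ncard_traceKer_eq hfrob hL hq hn).1
  have hb : ∀ i < n, a i / α = (a 0 / α) ^ q ^ i := by
    refine coeff_eq_pow_of_forall_pow_eq_self hfrob hL hq hn fun x ↦ ?_
    obtain ⟨c, hc, hcx⟩ := exists_mem_eq_mul_of_ncard_range_le
      (fun c hc ↦ qPolyHom_mul_of_mem_frobFixed hfrob n a hc) (hrange.trans hfix.symm).le hx₀ x
    simp only [div_mul_eq_mul_div, ← sum_div]
    rw [← qPolyHom_apply hfrob, hcx, mul_div_cancel_right₀ _ hx₀]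
    exact hc
  refine ⟨α, a 0 / α, hx₀, fun hβ ↦ hx₀ ?_, fun i hi ↦ ?_⟩
  · show ∑ i ∈ range n, a i * x₀ ^ q ^ i = 0
    refine sum_eq_zero fun i hi ↦ ?_
    have hai := hb i (mem_range.mp hi)
    rw [hβ, zero_pow (pow_ne_zero _ (by omega)), div_eq_zero_iff] at hai
    rw [hai.resolve_right hx₀, zero_mul]
  · rw [← hb i hi, mul_div_cancel₀ _ hx₀]

lemma ncard_setOf_sum_eq_zero_of_coeff_eq (hfrob : ∀ x y : L, (x + y) ^ q = x ^ q + y ^ q)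
    [Fintype L] {n : ℕ} (hL : Fintype.card L = q ^ n) (hq : 1 < q) (hn : 0 < n) {a : ℕ → L}
    {α β : L} (hα : α ≠ 0) (hβ : β ≠ 0) (ha : ∀ i < n, a i = α * β ^ q ^ i) :
    {x : L | ∑ i ∈ range n, a i * x ^ q ^ i = 0}.ncard = q ^ (n - 1) := by
  have hset : {x : L | ∑ i ∈ range n, a i * x ^ q ^ i = 0} = (β * ·) ⁻¹' traceKer q n := by
    ext x
    have htrace : ∑ i ∈ range n, a i * x ^ q ^ i = α * ∑ i ∈ range n, (β * x) ^ q ^ i := by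
      rw [mul_sum]
      exact sum_congr rfl fun i hi ↦ by rw [ha i (mem_range.mp hi), mul_pow, mul_assoc]
    simp [htrace, hα, traceKer]
  rw [hset, Set.ncard_preimage_of_injective_subset_range (mul_right_injective₀ hβ)
    fun y _ ↦ ⟨β⁻¹ * y, mul_inv_cancel_left₀ hβ y⟩]
  exact (ncard_frobFixed_eq_and_ncard_traceKer_eq hfrob hL hq hn).2

end QPolynomial

open QPolynomial in
/-- A q-polynomial `f(x) = Σ_{i<n} a_i x^{q^i}` over `F_{q^n}` has kernel of
`F_q`-dimension exactly `n-1` (i.e. `q^{n-1}` roots) iff there are `α, β ∈ F_{q^n}^*`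
with `f(x) = α · Tr_{q^n/q}(βx)`, i.e. `a_i = α β^{q^i}` for all `i < n`. -/
theorem stmt7 (q n : ℕ) (hq : IsPrimePow q) (hn : 0 < n)
    (L : Type*) [Field L] [Fintype L] (hL : Fintype.card L = q ^ n)
    (a : ℕ → L) :
    Set.ncard {x : L | ∑ i ∈ Finset.range n, a i * x ^ q ^ i = 0} = q ^ (n - 1)
      ↔ ∃ α β : L, α ≠ 0 ∧ β ≠ 0 ∧ ∀ i < n, a i = α * β ^ q ^ i := by
  have hq1 := hq.one_lt
  obtain ⟨p, e, hp, -, rfl⟩ := hq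
  have : Fact p.Prime := ⟨hp.nat_prime⟩
  have : CharP L p := charP_of_card_eq_prime_pow (hL.trans (pow_mul p e n).symm)
  have hfrob : ∀ x y : L, (x + y) ^ p ^ e = x ^ p ^ e + y ^ p ^ e :=
    fun x y ↦ add_pow_char_pow x y p e
  exact ⟨exists_coeff_eq_mul_pow_of_ncard_eq hfrob hL hq1 hn,
    fun ⟨α, β, hα, hβ, ha⟩ ↦ ncard_setOf_sum_eq_zero_of_coeff_eq hfrob hL hq1 hn hα hβ ha⟩
end

section
/- Let gcd(s,n)=1 and 1 ≤ k ≤ n-1. The polynomial a_0 x - x^{q^{sk}} ∈ F_{q^n}[x] with a_0 ≠ 0 has exactly q^k roots in F_{q^n} if and only if k divides n and N_{q^n/q^k}(a_0) = 1. -/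
/-!
Since `a₀ ≠ 0`, the nonzero roots are the solutions of `x ^ (q ^ (s * k) - 1) = a₀` in the cyclic
group `Lˣ` of order `q ^ n - 1`. In a cyclic group of order `N`, `u ^ d = a` has `gcd N d`
solutions if `a ^ (N / gcd N d) = 1` and none otherwise, and here
`gcd (q ^ n - 1) (q ^ (s * k) - 1) = q ^ gcd n (s * k) - 1 = q ^ gcd n k - 1` as `s` is coprime
to `n`. So the polynomial has either `1` or `q ^ gcd n k` roots, and `q ^ k` of them exactly when
`gcd n k = k` and the norm condition holds.
-/

namespace IsCyclic

variable {G : Type*} [CommGroup G] [IsCyclic G] [Finite G]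

theorem range_powMonoidHom_eq_ker (d : ℕ) :
    (powMonoidHom d : G →* G).range =
      (powMonoidHom (Nat.card G / (Nat.card G).gcd d)).ker := by
  refine Subgroup.eq_of_le_of_card_ge ?_ ?_
  · rintro _ ⟨u, rfl⟩
    have hN : Nat.card G ∣ d * (Nat.card G / (Nat.card G).gcd d) := by
      rw [← Nat.mul_div_assoc _ (Nat.gcd_dvd_left _ _), mul_comm,
        Nat.mul_div_assoc _ (Nat.gcd_dvd_right _ _)]
      exact dvd_mul_right _ _
    obtain ⟨c, hc⟩ := hN
    change (u ^ d) ^ _ = 1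
    rw [← pow_mul, hc, pow_mul, pow_card_eq_one', one_pow]
  · rw [card_powMonoidHom_ker, card_powMonoidHom_range,
      Nat.gcd_eq_right (Nat.div_dvd_of_dvd (Nat.gcd_dvd_left _ _))]

open Classical in
theorem ncard_pow_eq (d : ℕ) (a : G) :
    {u : G | u ^ d = a}.ncard =
      if a ^ (Nat.card G / (Nat.card G).gcd d) = 1 then (Nat.card G).gcd d else 0 := by
  split_ifs with ha
  · obtain ⟨u, rfl⟩ : a ∈ (powMonoidHom d : G →* G).range := by
      rwa [range_powMonoidHom_eq_ker]
    rw [← card_powMonoidHom_ker, ← Nat.card_coe_set_eq,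
      ← Nat.card_congr ((powMonoidHom d : G →* G).fiberEquivKer u)]
    rfl
  · refine (Set.ncard_eq_zero).mpr (Set.eq_empty_of_forall_notMem fun u hu => ha ?_)
    have : a ∈ (powMonoidHom d : G →* G).range := ⟨u, hu⟩
    rwa [range_powMonoidHom_eq_ker] at this

end IsCyclic

namespace FiniteField

variable {L : Type*} [Field L]

theorem setOf_mul_sub_pow_eq_zero {a : L} (ha : a ≠ 0) {m : ℕ} (hm : 2 ≤ m) :
    {x : L | a * x - x ^ m = 0} =
      insert 0 (Units.val '' {u : Lˣ | u ^ (m - 1) = Units.mk0 a ha}) := by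
  ext x
  obtain rfl | hx := eq_or_ne x 0
  · simp [zero_pow (by omega : m ≠ 0)]
  obtain ⟨u, rfl⟩ := hx.isUnit
  have hum : (u : L) ^ m = u ^ (m - 1) * u := by rw [← pow_succ, Nat.sub_add_cancel (by omega)]
  simp only [Set.mem_insert_iff, hx, false_or, Units.val_injective.mem_set_image,
    Set.mem_ofPred_eq, sub_eq_zero, hum, mul_left_inj' hx, Units.ext_iff, Units.val_pow_eq_pow_val,
    Units.val_mk0, eq_comm]

variable [Finite L]

open Classical in
theorem ncard_setOf_mul_sub_pow_eq_zero {a : L} (ha : a ≠ 0) {m : ℕ} (hm : 2 ≤ m) :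
    {x : L | a * x - x ^ m = 0}.ncard =
      if a ^ ((Nat.card L - 1) / (Nat.card L - 1).gcd (m - 1)) = 1
      then (Nat.card L - 1).gcd (m - 1) + 1 else 1 := by
  have h0 : (0 : L) ∉ Units.val '' {u : Lˣ | u ^ (m - 1) = Units.mk0 a ha} := by
    rintro ⟨u, -, hu⟩
    exact u.ne_zero hu
  rw [setOf_mul_sub_pow_eq_zero ha hm, Set.ncard_insert_of_notMem h0 (Set.toFinite _),
    Set.ncard_image_of_injective _ Units.val_injective, IsCyclic.ncard_pow_eq, Nat.card_units]
  simp only [Units.ext_iff, Units.val_pow_eq_pow_val, Units.val_mk0, Units.val_one]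
  split_ifs <;> rfl

end FiniteField

theorem stmt8_general (q n k s : ℕ) (hq : IsPrimePow q) (hs : Nat.gcd s n = 1)
    (hk1 : 1 ≤ k) (hk2 : k ≤ n - 1)
    (L : Type*) [Field L] [Fintype L] (hL : Fintype.card L = q ^ n)
    (a₀ : L) (ha₀ : a₀ ≠ 0) :
    Set.ncard {x : L | a₀ * x - x ^ q ^ (s * k) = 0} = q ^ k
      ↔ (k ∣ n ∧ a₀ ^ ((q ^ n - 1) / (q ^ k - 1)) = 1) := by
  have hq2 : 2 ≤ q := hq.two_le
  have hs0 : s ≠ 0 := by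
    rintro rfl
    rw [Nat.gcd_zero_left] at hs
    omega
  have hm : 2 ≤ q ^ (s * k) := hq2.trans (Nat.le_self_pow (by positivity) q)
  have hgcd : (q ^ n - 1).gcd (q ^ (s * k) - 1) = q ^ n.gcd k - 1 := by
    rw [Nat.pow_sub_one_gcd_pow_sub_one, Nat.Coprime.gcd_mul_left_cancel_right _ hs]
  have hqk : 2 ≤ q ^ k := hq2.trans (Nat.le_self_pow (by omega) q)
  rw [FiniteField.ncard_setOf_mul_sub_pow_eq_zero ha₀ hm, Nat.card_eq_fintype_card, hL, hgcd,
    Nat.sub_add_cancel (Nat.one_le_pow _ _ (by omega))]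
  split_ifs with hnorm
  · rw [Nat.pow_right_inj hq2, Nat.gcd_eq_right_iff_dvd]
    exact ⟨fun hkn => ⟨hkn, by rwa [Nat.gcd_eq_right hkn] at hnorm⟩, And.left⟩
  · refine iff_of_false (by omega) fun ⟨hkn, _⟩ => hnorm ?_
    rwa [Nat.gcd_eq_right hkn]

/-- For `gcd(s,n) = 1` and `1 ≤ k ≤ n-1`, the polynomial
`a_0 x - x^{q^{sk}}` over `F_{q^n}` (`a_0 ≠ 0`) has exactly `q^k` roots in `F_{q^n}`
iff `k ∣ n` and `N_{q^n/q^k}(a_0) = a_0^{(q^n-1)/(q^k-1)} = 1`. -/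
theorem stmt8 (q n k s : ℕ) (hq : IsPrimePow q) (hn : 0 < n) (hs : Nat.gcd s n = 1)
    (hk1 : 1 ≤ k) (hk2 : k ≤ n - 1)
    (L : Type*) [Field L] [Fintype L] (hL : Fintype.card L = q ^ n)
    (a₀ : L) (ha₀ : a₀ ≠ 0) :
    Set.ncard {x : L | a₀ * x - x ^ q ^ (s * k) = 0} = q ^ k
      ↔ (k ∣ n ∧ a₀ ^ ((q ^ n - 1) / (q ^ k - 1)) = 1) :=
  stmt8_general q n k s hq hs hk1 hk2 L hL a₀ ha₀
end

section
/- Suppose f(x) = a_0x + a_1x^q + ... + a_{n-3}x^{q^{n-3}} - x^{q^{n-2}} over F_{q^n} has kernel of F_q-dimension n-2. Then for every integer t ≥ 2 with gcd(t-1,n)=1, the coefficients a_{t-2} and a_{n-t} are nonzero and, setting s = n-t+1, the relation a_{n-2t+1}·a_{t-2}^{q^{2s}+q^s} = -a_{n-t}^{q^s+1}·a_{2t-3}^{q^{2s}} holds, where indices n-2t+1 and 2t-3 are taken modulo n. -/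
/-!
Let `K ⊆ L` be the subfield with `q` elements. Then `f` is a `K`-linear endomorphism of `L` of
rank `2`. For `s` coprime to `n` the Moore determinant `v w^{q^s} - w v^{q^s}` of a basis `v, w`
of the image of `f` is nonzero, so on that image every Frobenius power is a combination
`y^{q^c} = α y + β y^{q^s}` with `α, β ∈ L`. Composing with `f` and comparing coefficients
(the maps `x ↦ x^{q^m}`, `m < n`, are `L`-linearly independent) gives
`a_{j-c}^{q^c} = α a_j + β a_{j-s}^{q^s}` for all `j`. Take `s = n - t + 1`: the cases
`c = 1`, `c = s + 1` and `c = 2s`, together with `a_{-2} = -1` and `a_{-1} = 0`, give the claims.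
-/

open Module FiniteField

section

variable {K : Type*} [Field K] [Fintype K]

local notation "q" => Fintype.card K

theorem frobeniusAlgHom_pow_apply {R : Type*} [CommRing R] [Algebra K R] (c : ℕ) (x : R) :
    (frobeniusAlgHom K R ^ c) x = x ^ q ^ c := by
  rw [AlgHom.coe_pow, coe_frobeniusAlgHom, pow_iterate]

variable {L : Type*} [Field L] [Fintype L] [Algebra K L]

theorem frobeniusAlgHom_pow_eq_pow_iff {c d : ℕ} :
    frobeniusAlgHom K L ^ c = frobeniusAlgHom K L ^ d ↔ c ≡ d [MOD finrank K L] := by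
  rw [← orderOf_frobeniusAlgHom K L]
  exact (orderOf_pos_iff.mp (orderOf_frobeniusAlgHom K L ▸ finrank_pos)).pow_inj_mod

theorem pow_card_pow_eq_of_modEq {c d : ℕ} (h : c ≡ d [MOD finrank K L]) (x : L) :
    x ^ q ^ c = x ^ q ^ d := by
  rw [← frobeniusAlgHom_pow_apply, ← frobeniusAlgHom_pow_apply,
    frobeniusAlgHom_pow_eq_pow_iff.mpr h]

theorem mem_range_algebraMap_of_pow_card_pow_eq_self {s : ℕ} (hs : s.Coprime (finrank K L))
    {x : L} (hx : x ^ q ^ s = x) : x ∈ Set.range (algebraMap K L) := by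
  set σ := frobeniusAlgEquivOfAlgebraic K L
  have hσ (c : ℕ) : ⇑(σ ^ c) = (· ^ q ^ c) := by
    rw [AlgEquiv.coe_pow, coe_frobeniusAlgEquivOfAlgebraic_iterate]
  obtain ⟨d, -, hd⟩ := Nat.exists_mul_mod_eq_of_coprime 1 hs finrank_pos.ne'
  have hσx : σ x = x := by
    have hσsd : σ = (σ ^ s) ^ d := by
      conv_lhs => rw [← pow_one σ]
      rw [← pow_mul, pow_eq_pow_iff_modEq, orderOf_frobeniusAlgEquivOfAlgebraic]
      exact hd.symm
    rw [hσsd, AlgEquiv.coe_pow]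
    exact Function.iterate_fixed (by rw [hσ]; exact hx) d
  rw [IsGalois.mem_range_algebraMap_iff_fixed]
  intro f
  obtain ⟨m, rfl⟩ := (bijective_frobeniusAlgEquivOfAlgebraic_pow K L).2 f
  rw [AlgEquiv.coe_pow]
  exact Function.iterate_fixed hσx _

theorem mul_pow_card_pow_sub_ne_zero {s : ℕ} (hs : s.Coprime (finrank K L)) {v w : L}
    (hvw : LinearIndependent K ![v, w]) : v * w ^ q ^ s - w * v ^ q ^ s ≠ 0 := by
  have hv : v ≠ 0 := hvw.ne_zero 0
  intro hδ
  have hρ : (w / v) ^ q ^ s = w / v := by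
    rw [div_pow, div_eq_div_iff (pow_ne_zero _ hv) hv]
    linear_combination hδ
  obtain ⟨r, hr⟩ := mem_range_algebraMap_of_pow_card_pow_eq_self hs hρ
  refine (LinearIndependent.pair_iff' hv).mp hvw r ?_
  rw [Algebra.smul_def, hr, div_mul_cancel₀ _ hv]

theorem exists_pow_card_pow_eq_of_finrank_eq_two {s : ℕ} (hs : s.Coprime (finrank K L))
    (V : Submodule K L) (hV : finrank K V = 2) (c : ℕ) :
    ∃ α β : L, ∀ y ∈ V, y ^ q ^ c = α * y + β * y ^ q ^ s := by
  let b := finBasisOfFinrankEq K V hV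
  set v : L := (b 0 : L)
  set w : L := (b 1 : L)
  have hvw : LinearIndependent K ![v, w] := by
    have hb := b.linearIndependent.map' V.subtype (Submodule.ker_subtype V)
    rwa [show ⇑V.subtype ∘ ⇑b = ![v, w] by ext i; fin_cases i <;> rfl] at hb
  have hδ := mul_pow_card_pow_sub_ne_zero hs hvw
  set δ := v * w ^ q ^ s - w * v ^ q ^ s with hδdef
  -- Cramer's rule for the system `α z + β z ^ q ^ s = z ^ q ^ c`, `z ∈ {v, w}`
  set α := (v ^ q ^ c * w ^ q ^ s - w ^ q ^ c * v ^ q ^ s) / δ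
  set β := (w ^ q ^ c * v - v ^ q ^ c * w) / δ
  refine ⟨α, β, ?_⟩
  let G : L →ₗ[K] L := (frobeniusAlgHom K L ^ c).toLinearMap - α • LinearMap.id
    - β • (frobeniusAlgHom K L ^ s).toLinearMap
  have hG (z : L) : G z = z ^ q ^ c - (α * z + β * z ^ q ^ s) := by
    simp only [G, LinearMap.sub_apply, LinearMap.smul_apply, AlgHom.toLinearMap_apply,
      frobeniusAlgHom_pow_apply, LinearMap.id_coe, id_eq, smul_eq_mul]
    ring
  have hGV : G ∘ₗ V.subtype = 0 := by
    refine b.ext fun i => ?_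
    rw [LinearMap.comp_apply, Submodule.subtype_apply, hG, LinearMap.zero_apply, sub_eq_zero]
    fin_cases i
    · change v ^ q ^ c = α * v + β * v ^ q ^ s
      rw [div_mul_eq_mul_div, div_mul_eq_mul_div, ← add_div, eq_div_iff hδ, hδdef]
      ring
    · change w ^ q ^ c = α * w + β * w ^ q ^ s
      rw [div_mul_eq_mul_div, div_mul_eq_mul_div, ← add_div, eq_div_iff hδ, hδdef]
      ring
  intro y hy
  rw [← sub_eq_zero, ← hG]
  exact LinearMap.congr_fun hGV ⟨y, hy⟩

theorem finrank_range_add_eq_of_natCard_ker {V W : Type*} [AddCommGroup V] [Module K V] [Finite V]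
    [AddCommGroup W] [Module K W] (f : V →ₗ[K] W) {r : ℕ}
    (h : Nat.card (LinearMap.ker f) = q ^ r) :
    finrank K (LinearMap.range f) + r = finrank K V := by
  have hr : finrank K (LinearMap.ker f) = r := by
    refine Nat.pow_right_injective (Fintype.one_lt_card (α := K)) ?_
    dsimp only
    rw [← h, natCard_eq_pow_finrank (K := K), Nat.card_eq_fintype_card]
  rw [← hr, LinearMap.finrank_range_add_finrank_ker]

instance : NeZero (finrank K L) := .of_pos finrank_pos

noncomputable def linearizedPoly : (ZMod (finrank K L) → L) →ₗ[L] L →ₗ[K] L :=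
  Fintype.linearCombination L fun m => (frobeniusAlgHom K L ^ m.val).toLinearMap

theorem linearizedPoly_apply (a : ZMod (finrank K L) → L) (x : L) :
    linearizedPoly a x = ∑ m, a m * x ^ q ^ m.val := by
  simp only [linearizedPoly, Fintype.linearCombination_apply, LinearMap.sum_apply,
    LinearMap.smul_apply, AlgHom.toLinearMap_apply, frobeniusAlgHom_pow_apply,
    smul_eq_mul]

theorem linearizedPoly_apply_eq_sum_range (a : ZMod (finrank K L) → L) (x : L) :
    linearizedPoly a x = ∑ i ∈ Finset.range (finrank K L), a i * x ^ q ^ i := by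
  rw [linearizedPoly_apply]
  refine Finset.sum_nbij ZMod.val (fun m _ => Finset.mem_range.mpr m.val_lt)
    (ZMod.val_injective _).injOn
    (fun i hi => ⟨i, by simp, ZMod.val_cast_of_lt (Finset.mem_range.mp hi)⟩)
    fun m _ => by rw [ZMod.natCast_zmod_val]

theorem linearizedPoly_injective : Function.Injective (linearizedPoly (K := K) (L := L)) := by
  rw [linearizedPoly, ← linearIndependent_iff_injective_fintypeLinearCombination]
  refine (linearIndependent_algHom_toLinearMap K L L).comp _ fun m m' h => ZMod.val_injective _ ?_
  exact Nat.ModEq.eq_of_lt_of_lt (frobeniusAlgHom_pow_eq_pow_iff.mp h) m.val_lt m'.val_lt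

/-- Row `c` of the Dickson matrix of `a`. -/
theorem linearizedPoly_apply_pow (a : ZMod (finrank K L) → L) (x : L) (c : ℕ) :
    linearizedPoly a x ^ q ^ c
      = linearizedPoly (fun m : ZMod (finrank K L) => a (m - c) ^ q ^ c) x := by
  rw [linearizedPoly_apply, linearizedPoly_apply, ← frobeniusAlgHom_pow_apply, map_sum]
  refine Fintype.sum_equiv (Equiv.addRight (c : ZMod (finrank K L))) _ _ fun m => ?_
  rw [map_mul, frobeniusAlgHom_pow_apply, frobeniusAlgHom_pow_apply, Equiv.coe_addRight,
    add_sub_cancel_right, ← pow_mul, ← pow_add]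
  congr 1
  refine pow_card_pow_eq_of_modEq ?_ x
  rw [← ZMod.natCast_eq_natCast_iff]
  simp

theorem linearizedPoly_coeff_relation {a : ZMod (finrank K L) → L}
    (ha : finrank K (LinearMap.range (linearizedPoly a)) = 2) {s : ℕ}
    (hs : s.Coprime (finrank K L)) (c : ℕ) :
    ∃ α β : L, ∀ j, a (j - c) ^ q ^ c = α * a j + β * a (j - s) ^ q ^ s := by
  obtain ⟨α, β, h⟩ := exists_pow_card_pow_eq_of_finrank_eq_two hs _ ha c
  have hcoeff : (fun m => a (m - c) ^ q ^ c) = α • a + β • fun m => a (m - s) ^ q ^ s := by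
    refine linearizedPoly_injective (LinearMap.ext fun x => ?_)
    rw [map_add, map_smul, map_smul, LinearMap.add_apply, LinearMap.smul_apply,
      LinearMap.smul_apply, smul_eq_mul, smul_eq_mul, ← linearizedPoly_apply_pow,
      ← linearizedPoly_apply_pow]
    exact h _ ⟨x, rfl⟩
  exact ⟨α, β, fun j => congrFun hcoeff j⟩

end

theorem exists_subfield_natCard_eq {L : Type*} [Field L] [Fintype L] {q n : ℕ}
    (hq : IsPrimePow q) (hL : Fintype.card L = q ^ n) : ∃ K : Subfield L, Nat.card K = q := by
  obtain ⟨p, e, hp, he, rfl⟩ := hq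
  have := Fact.mk hp.nat_prime
  rw [← pow_mul] at hL
  have := charP_of_card_eq_prime_pow hL
  let := ZMod.algebra L p
  have hfin : finrank (ZMod p) L = e * n :=
    Nat.pow_right_injective hp.nat_prime.two_le (by dsimp only; rw [pow_finrank_eq_card, hL])
  obtain ⟨ι⟩ := nonempty_algHom_of_finrank_dvd (F := ZMod p) (K := GaloisField p e) (L := L)
    (by rw [GaloisField.finrank p he.ne', hfin]; exact dvd_mul_right e n)
  refine ⟨ι.fieldRange.toSubfield, ?_⟩
  rw [← GaloisField.card p e he.ne', ← Nat.card_range_of_injective ι.toRingHom.injective]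
  rfl

theorem coeff_identities_of_shift_relation {L : Type*} [Field L] {n q s : ℕ} (hq : q ≠ 0)
    {a : ZMod n → L} (h2 : a (-2) = -1) (h1 : a (-1) = 0)
    (hrel : ∀ c : ℕ, ∃ α β : L, ∀ j,
      a (j - c) ^ q ^ c = α * a j + β * a (j - s) ^ q ^ s) :
    a (-1 - s) ≠ 0 ∧ a (s - 1) ≠ 0 ∧
      a (2 * s - 1) * a (-1 - s) ^ (q ^ (2 * s) + q ^ s)
        = -(a (s - 1) ^ (q ^ s + 1) * a (-1 - 2 * s) ^ q ^ (2 * s)) := by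
  have hqs (c : ℕ) : q ^ c ≠ 0 := pow_ne_zero c hq
  refine ⟨fun h0 => ?_, fun h0 => ?_, ?_⟩
  · obtain ⟨α, β, h⟩ := hrel 1
    have := h (-1)
    rw [show (-1 : ZMod n) - (1 : ℕ) = -2 by push_cast; ring, h2, h1, h0,
      zero_pow (hqs s)] at this
    simp at this
  · obtain ⟨α, β, h⟩ := hrel (s + 1)
    have := h (s - 1)
    rw [show (s - 1 : ZMod n) - (s + 1 : ℕ) = -2 by push_cast; ring,
      show (s - 1 : ZMod n) - s = -1 by ring,
      h2, h1, h0, zero_pow (hqs s)] at this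
    simp at this
  · obtain ⟨α, β, h⟩ := hrel (2 * s)
    have e1 := h (s - 1)
    have e2 := h (2 * s - 1)
    have e3 := h (-1)
    rw [show (s - 1 : ZMod n) - (2 * s : ℕ) = -1 - s by push_cast; ring,
      show (s - 1 : ZMod n) - s = -1 by ring, h1, zero_pow (hqs s)] at e1
    rw [show (2 * s - 1 : ZMod n) - (2 * s : ℕ) = -1 by push_cast; ring,
      show (2 * s - 1 : ZMod n) - s = s - 1 by ring, h1, zero_pow (hqs _)] at e2
    rw [show (-1 : ZMod n) - (2 * s : ℕ) = -1 - 2 * s by push_cast; ring, h1] at e3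
    linear_combination (a (2 * s - 1) * a (-1 - s) ^ q ^ s) * e1
      - (a (s - 1) * a (-1 - s) ^ q ^ s) * e2 + (a (s - 1) ^ q ^ s * a (s - 1)) * e3

/-- Suppose `f(x) = a_0 x + a_1 x^q + ... + a_{n-3} x^{q^{n-3}} - x^{q^{n-2}}`
over `F_{q^n}` has kernel of `F_q`-dimension `n-2` (`q^{n-2}` roots). Then for every
`t ≥ 2` with `gcd(t-1,n) = 1`, the coefficients `a_{t-2}` and `a_{n-t}` are nonzero and,
with `s = n - t + 1`, `a_{n-2t+1}·a_{t-2}^{q^{2s}+q^s} = -a_{n-t}^{q^s+1}·a_{2t-3}^{q^{2s}}`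
(indices modulo `n`, with `a_{n-2} = -1`, `a_{n-1} = 0`). -/
theorem stmt9 (q n : ℕ) (hq : IsPrimePow q) (hn : 3 ≤ n)
    (L : Type*) [Field L] [Fintype L] (hL : Fintype.card L = q ^ n)
    (a : ZMod n → L)
    (hlead : a ((n : ZMod n) - 2) = -1) (htop : a ((n : ZMod n) - 1) = 0)
    (hker : Set.ncard {x : L | ∑ i ∈ Finset.range (n - 1), a (i : ZMod n) * x ^ q ^ i = 0}
      = q ^ (n - 2)) :
    ∀ t : ℕ, 2 ≤ t → t ≤ n → Nat.gcd (t - 1) n = 1 →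
      a ((t : ZMod n) - 2) ≠ 0 ∧ a ((n : ZMod n) - (t : ZMod n)) ≠ 0 ∧
      a ((n : ZMod n) - 2 * (t : ZMod n) + 1) *
          a ((t : ZMod n) - 2) ^ (q ^ (2 * (n - t + 1)) + q ^ (n - t + 1))
        = -(a ((n : ZMod n) - (t : ZMod n)) ^ (q ^ (n - t + 1) + 1) *
            a (2 * (t : ZMod n) - 3) ^ q ^ (2 * (n - t + 1))) := by
  intro t _ htn hgcd
  obtain ⟨K, hK⟩ := exists_subfield_natCard_eq hq hL
  have : Fintype K := Fintype.ofFinite K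
  rw [Nat.card_eq_fintype_card] at hK
  subst hK
  have hrank : finrank K L = n := Nat.pow_right_injective (Fintype.one_lt_card (α := K))
    (by dsimp only; rw [← card_eq_pow_finrank, hL])
  subst hrank
  have hn0 : (finrank K L : ZMod (finrank K L)) = 0 := ZMod.natCast_self _
  have hsum (x : L) : linearizedPoly a x = ∑ i ∈ Finset.range (finrank K L - 1),
      a (i : ZMod (finrank K L)) * x ^ Fintype.card K ^ i := by
    rw [linearizedPoly_apply_eq_sum_range,
      show Finset.range (finrank K L) = Finset.range (finrank K L - 1 + 1) by congr 1; omega,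
      Finset.sum_range_succ, Nat.cast_sub (by omega), Nat.cast_one, htop, zero_mul, add_zero]
  have hrange : finrank K (LinearMap.range (linearizedPoly a)) = 2 := by
    have := finrank_range_add_eq_of_natCard_ker (linearizedPoly a) (r := finrank K L - 2)
      (by rw [← hker]; simp_rw [← hsum]; exact Nat.card_coe_set_eq _)
    omega
  set s := finrank K L - t + 1
  have hs : s.Coprime (finrank K L) := by
    rw [show s = finrank K L - (t - 1) by omega, Nat.coprime_self_sub_left (by omega)]
    exact hgcd
  have ht : (t : ZMod (finrank K L)) = 1 - s := by
    simp only [s]; push_cast [Nat.cast_sub htn]; rw [hn0]; ring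
  obtain ⟨h1, h2, h3⟩ := coeff_identities_of_shift_relation Fintype.card_ne_zero
    (by rwa [hn0, zero_sub] at hlead) (by rwa [hn0, zero_sub] at htop)
    (linearizedPoly_coeff_relation hrange hs)
  rw [show (t : ZMod (finrank K L)) - 2 = -1 - s by rw [ht]; ring,
    show (finrank K L : ZMod (finrank K L)) - t = s - 1 by rw [hn0, ht]; ring,
    show (finrank K L : ZMod (finrank K L)) - 2 * t + 1 = 2 * s - 1 by rw [hn0, ht]; ring,
    show 2 * (t : ZMod (finrank K L)) - 3 = -1 - 2 * s by rw [ht]; ring]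
  exact ⟨h1, h2, h3⟩
end

section
/- Let f(x) be a q^s-polynomial over F_{q^n} with gcd(s,n)=1, of q^s-degree n-2, with kernel of F_q-dimension n-2. If the coefficient of x^{q^s} in f is zero, then n is even and f(x) = α·Tr_{q^n/q^2}(βx) for some α, β ∈ F_{q^n}*. -/
/-!
Let `K = 𝔽_q ⊆ L` and `σ = (x ↦ x ^ q ^ s)`, which generates `Gal(L/K)` because `gcd(s, n) = 1`.
The image of the `K`-linear map `f` is spanned by two independent vectors `u, v`, so by
nondegeneracy of the trace form `f x = u · Tr(β x) + v · Tr(γ x)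
= ∑_{i<n} (u σⁱ β + v σⁱ γ) σⁱ x`. By Artin's independence of characters these are the
coefficients of `f`; the vanishing coefficients of `σ` and `σⁿ⁻¹` give
`u = -v σ(t) = -v σ⁻¹(t)` with `t = γ / β`. Hence `σ²` fixes `t` while `σ` does not (as `u, v`
are independent), which forces `n` to be even, and then
`f x = v (t - σ t) ∑_{k<n/2} σ^{2k} (β x)`.
-/

open Finset Module Subgroup

theorem Finset.sum_range_two_mul {M : Type*} [AddCommMonoid M] (g : ℕ → M) (m : ℕ) :
    ∑ i ∈ range (2 * m), g i = ∑ k ∈ range m, g (2 * k) + ∑ k ∈ range m, g (2 * k + 1) := by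
  induction m with
  | zero => simp
  | succ m ih =>
    rw [Nat.mul_succ, sum_range_succ, sum_range_succ, ih, sum_range_succ, sum_range_succ]
    abel

theorem Finset.sum_range_ite_lt {M : Type*} [AddCommMonoid M] (g : ℕ → M) {m n : ℕ}
    (h : m ≤ n) : ∑ i ∈ range n, (if i < m then g i else 0) = ∑ i ∈ range m, g i := by
  rw [← sum_range_add_sum_Ico _ h, sum_congr rfl fun i hi ↦ if_pos (mem_range.1 hi),
    sum_eq_zero fun i hi ↦ if_neg (by simp only [mem_Ico] at hi; omega), add_zero]

section Group

variable {G : Type*} [Group G]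

theorem zpowers_pow_eq_of_coprime {x : G} {s : ℕ} (hs : s.Coprime (orderOf x)) :
    zpowers (x ^ s) = zpowers x := by
  obtain ⟨m, hm⟩ := exists_pow_eq_self_of_coprime hs
  refine le_antisymm (zpowers_le.2 (pow_mem (mem_zpowers x) s)) (zpowers_le.2 ?_)
  have hmem : (x ^ s) ^ m ∈ zpowers (x ^ s) := pow_mem (mem_zpowers _) m
  rwa [hm] at hmem

theorem smul_eq_of_pow_two_smul_eq {α : Type*} [MulAction G α] {g : G} (hg : Odd (orderOf g))
    {a : α} (h : g ^ 2 • a = a) : g • a = a := by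
  obtain ⟨k, hk⟩ := hg
  have hg2 : g = (g ^ 2) ^ (k + 1) := by
    rw [← pow_mul, show 2 * (k + 1) = orderOf g + 1 by omega, pow_succ, pow_orderOf_eq_one,
      one_mul]
  have hle : zpowers (g ^ 2) ≤ MulAction.stabilizer G a :=
    zpowers_le.2 (MulAction.mem_stabilizer_iff.2 h)
  rw [hg2]
  exact MulAction.mem_stabilizer_iff.1 (hle (pow_mem (mem_zpowers _) _))

variable [Fintype G] {M : Type*} [AddCommMonoid M]

theorem sum_range_orderOf_pow (x : G) [DecidablePred (· ∈ zpowers x)] (f : G → M) :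
    ∑ i ∈ range (orderOf x), f (x ^ i) = ∑ g with g ∈ zpowers x, f g := by
  classical
  rw [← sum_image fun i hi j hj ↦ pow_injOn_Iio_orderOf (by simpa using hi) (by simpa using hj)]
  congr
  ext g
  simp [mem_zpowers_iff_mem_range_orderOf]

theorem sum_range_orderOf_pow_of_forall_mem_zpowers {x : G} (hx : ∀ g, g ∈ zpowers x)
    (f : G → M) : ∑ i ∈ range (orderOf x), f (x ^ i) = ∑ g, f g := by
  classical
  rw [sum_range_orderOf_pow, filter_true_of_mem fun g _ ↦ hx g]

theorem sum_range_orderOf_pow_pow_of_coprime {x : G} {s : ℕ} (hs : s.Coprime (orderOf x))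
    (f : G → M) :
    ∑ i ∈ range (orderOf x), f ((x ^ s) ^ i) = ∑ i ∈ range (orderOf x), f (x ^ i) := by
  classical
  conv_lhs => rw [← hs.symm.orderOf_pow]
  simp only [sum_range_orderOf_pow, zpowers_pow_eq_of_coprime hs]

end Group

section LinearizedMap

variable {K L : Type*} [Field K] [Field L] [Algebra K L] {σ : Gal(L/K)}

variable (σ) in
/-- The `σ`-linearized polynomial `∑_{i<m} aᵢ σⁱ`; for `σ = (x ↦ x ^ q ^ s)` this is the
`q^s`-polynomial `∑_{i<m} aᵢ x ^ q ^ (s i)`. -/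
noncomputable def linearizedMap (a : ℕ → L) (m : ℕ) : L →ₗ[K] L :=
  ∑ i ∈ range m, a i • (σ ^ i).toLinearMap

@[simp]
theorem linearizedMap_apply (a : ℕ → L) (m : ℕ) (x : L) :
    linearizedMap σ a m x = ∑ i ∈ range m, a i * (σ ^ i) x := by
  simp [linearizedMap]

theorem eq_neg_mul_apply_div_of_mul_add_mul_eq_zero {τ : Gal(L/K)} {u v β γ : L} (hβ : β ≠ 0)
    (h : u * τ β + v * τ γ = 0) : u = -(v * τ (γ / β)) := by
  have hτβ : τ β ≠ 0 := by simpa using hβ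
  rw [map_div₀]
  field_simp
  linear_combination h

theorem sum_mul_pow_apply_eq_mul_sum_pow_two_mul {t : L} (ht : (σ ^ 2) t = t) (v β x : L)
    (m : ℕ) :
    ∑ i ∈ range (2 * m), (-(v * σ t) * (σ ^ i) β + v * (σ ^ i) (t * β)) * (σ ^ i) x
      = v * (t - σ t) * ∑ k ∈ range m, (σ ^ (2 * k)) (β * x) := by
  have heven (k : ℕ) : (σ ^ (2 * k)) t = t := by
    rw [pow_mul, AlgEquiv.coe_pow, Function.iterate_fixed ht]
  have hodd (k : ℕ) : (σ ^ (2 * k + 1)) t = σ t := by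
    rw [pow_succ', AlgEquiv.mul_apply, heven]
  rw [sum_range_two_mul, mul_sum, add_eq_left.2 (sum_eq_zero fun k _ ↦ ?odd)]
  case odd => rw [map_mul, hodd]; ring
  refine sum_congr rfl fun k _ ↦ ?_
  rw [map_mul, map_mul, heven]
  ring

theorem exists_eq_sum_algebraMap_trace_mul [FiniteDimensional K L] [Algebra.IsSeparable K L]
    {ι : Type*} [Fintype ι] (f : L →ₗ[K] L) (e : Basis ι K (LinearMap.range f)) :
    ∃ b : ι → L, ∀ x, f x = ∑ j, algebraMap K L (Algebra.trace K L (b j * x)) * e j := by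
  let T := (Algebra.traceForm K L).toDual (traceForm_nondegenerate K L)
  refine ⟨fun j ↦ T.symm (e.coord j ∘ₗ f.rangeRestrict), fun x ↦ ?_⟩
  simp only [← Algebra.traceForm_apply, T, LinearMap.BilinForm.apply_toDual_symm_apply,
    ← Algebra.smul_def]
  calc f x = (f.rangeRestrict x : L) := rfl
    _ = _ := by
      conv_lhs => rw [← e.sum_repr (f.rangeRestrict x)]
      simp only [Submodule.coe_sum, Submodule.coe_smul, Basis.coord_apply, LinearMap.coe_comp,
        Function.comp_apply]

variable [FiniteDimensional K L] [IsGalois K L]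

theorem orderOf_eq_finrank_of_forall_mem_zpowers (hσ : ∀ τ, τ ∈ zpowers σ) :
    orderOf σ = finrank K L := by
  rw [orderOf_eq_card_of_forall_mem_zpowers hσ, IsGalois.card_aut_eq_finrank]

theorem algebraMap_trace_eq_sum_pow (hσ : ∀ τ, τ ∈ zpowers σ) (x : L) :
    algebraMap K L (Algebra.trace K L x) = ∑ i ∈ range (finrank K L), (σ ^ i) x := by
  rw [trace_eq_sum_automorphisms, ← orderOf_eq_finrank_of_forall_mem_zpowers hσ,
    sum_range_orderOf_pow_of_forall_mem_zpowers hσ fun τ ↦ τ x]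

theorem linearIndependent_pow_apply (hσ : ∀ τ, τ ∈ zpowers σ) :
    LinearIndependent L fun i : Fin (finrank K L) ↦ ⇑(σ ^ (i : ℕ)) := by
  have hfin := orderOf_eq_finrank_of_forall_mem_zpowers hσ
  have hinj : Function.Injective
      fun i : Fin (finrank K L) ↦ ((σ ^ (i : ℕ) : Gal(L/K)) : L →* L) := fun i j hij ↦
    Fin.ext (pow_injOn_Iio_orderOf (by simp [hfin]) (by simp [hfin])
      (AlgEquiv.ext fun x ↦ DFunLike.congr_fun hij x))
  have hind := (linearIndependent_monoidHom L L).comp _ hinj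
  exact hind

theorem eq_of_forall_sum_mul_pow_apply_eq (hσ : ∀ τ, τ ∈ zpowers σ) {c d : ℕ → L}
    (h : ∀ x, ∑ i ∈ range (finrank K L), c i * (σ ^ i) x
      = ∑ i ∈ range (finrank K L), d i * (σ ^ i) x) {i : ℕ} (hi : i < finrank K L) :
    c i = d i := by
  have hzero : ∑ j : Fin (finrank K L), (c j - d j) • ⇑(σ ^ (j : ℕ)) = 0 := by
    ext x
    simp only [Finset.sum_apply, Pi.smul_apply, smul_eq_mul, Pi.zero_apply, sub_mul,
      sum_sub_distrib]
    rw [Fin.sum_univ_eq_sum_range (fun j ↦ c j * (σ ^ j) x),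
      Fin.sum_univ_eq_sum_range (fun j ↦ d j * (σ ^ j) x), h x, sub_self]
  have hli := linearIndependent_pow_apply hσ
  exact sub_eq_zero.1 (Fintype.linearIndependent_iff.1 hli (fun j ↦ c j - d j) hzero ⟨i, hi⟩)

theorem mem_range_algebraMap_of_apply_eq (hσ : ∀ τ, τ ∈ zpowers σ) {t : L} (ht : σ t = t) :
    t ∈ Set.range (algebraMap K L) := by
  have hle : zpowers σ ≤ MulAction.stabilizer Gal(L/K) t :=
    zpowers_le.2 (MulAction.mem_stabilizer_iff.2 ht)
  exact (IsGalois.mem_range_algebraMap_iff_fixed t).2 fun τ ↦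
    MulAction.mem_stabilizer_iff.1 (hle (hσ τ))

theorem exists_linearIndependent_apply_eq_sum (hσ : ∀ τ, τ ∈ zpowers σ) (f : L →ₗ[K] L)
    (hf : finrank K (LinearMap.range f) = 2) :
    ∃ u v β γ : L, LinearIndependent K ![u, v] ∧ ∀ x, f x =
      ∑ i ∈ range (finrank K L), (u * (σ ^ i) β + v * (σ ^ i) γ) * (σ ^ i) x := by
  let e := finBasisOfFinrankEq K (LinearMap.range f) hf
  obtain ⟨b, hb⟩ := exists_eq_sum_algebraMap_trace_mul f e
  refine ⟨e 0, e 1, b 0, b 1, ?_, fun x ↦ ?_⟩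
  · have hli := e.linearIndependent.map' _ (LinearMap.range f).ker_subtype
    have he : ![(e 0 : L), e 1] = (LinearMap.range f).subtype ∘ e := by
      ext i
      fin_cases i <;> rfl
    rwa [he]
  · rw [hb x, Fin.sum_univ_two, algebraMap_trace_eq_sum_pow hσ, algebraMap_trace_eq_sum_pow hσ,
      sum_mul, sum_mul, ← sum_add_distrib]
    refine sum_congr rfl fun i _ ↦ ?_
    simp only [map_mul]
    ring

theorem even_and_exists_of_coeff_eq (hσ : ∀ τ, τ ∈ zpowers σ) {n : ℕ} (hLn : finrank K L = n)
    (hn : 2 ≤ n) {c : ℕ → L} {u v β γ : L} (huv : LinearIndependent K ![u, v])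
    (hc : ∀ i < n, c i = u * (σ ^ i) β + v * (σ ^ i) γ) (hc1 : c 1 = 0) (hcn : c (n - 1) = 0)
    (hc0 : ∃ i < n, c i ≠ 0) :
    Even n ∧ ∃ α β : L, α ≠ 0 ∧ β ≠ 0 ∧ ∀ x, ∑ i ∈ range n, c i * (σ ^ i) x
      = α * ∑ k ∈ range (n / 2), (σ ^ (2 * k)) (β * x) := by
  have horder : orderOf σ = n := (orderOf_eq_finrank_of_forall_mem_zpowers hσ).trans hLn
  have hv : v ≠ 0 := by simpa using huv.ne_zero 1
  have h1 : u * σ β + v * σ γ = 0 := by simpa using (hc 1 (by omega)).symm.trans hc1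
  have hβ : β ≠ 0 := by
    rintro rfl
    have hγ : γ = 0 := by simpa [hv] using h1
    obtain ⟨i, hi, hci⟩ := hc0
    exact hci (by simp [hc i hi, hγ])
  set t := γ / β
  have hu1 : u = -(v * σ t) := eq_neg_mul_apply_div_of_mul_add_mul_eq_zero hβ h1
  have hu2 : u = -(v * (σ ^ (n - 1)) t) :=
    eq_neg_mul_apply_div_of_mul_add_mul_eq_zero hβ ((hc (n - 1) (by omega)).symm.trans hcn)
  have ht2 : (σ ^ 2) t = t := by
    have h : σ t = (σ ^ (n - 1)) t := mul_left_cancel₀ hv (neg_injective (hu1.symm.trans hu2))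
    calc (σ ^ 2) t = σ ((σ ^ (n - 1)) t) := by rw [pow_two, AlgEquiv.mul_apply, h]
      _ = t := by
        rw [← AlgEquiv.mul_apply, ← pow_succ', Nat.sub_add_cancel (by omega), ← horder,
          pow_orderOf_eq_one, AlgEquiv.one_apply]
  have ht1 : σ t ≠ t := by
    intro ht
    obtain ⟨k, hk⟩ := mem_range_algebraMap_of_apply_eq hσ ht
    have hdep := LinearIndependent.pair_iff.1 huv 1 k (by
      rw [hu1, ht, ← hk, one_smul, Algebra.smul_def]
      ring)
    exact one_ne_zero hdep.1
  have heven : Even n := by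
    by_contra hodd
    rw [Nat.not_even_iff_odd, ← horder] at hodd
    exact ht1 (smul_eq_of_pow_two_smul_eq hodd ht2)
  refine ⟨heven, v * (t - σ t), β, mul_ne_zero hv (sub_ne_zero.2 (Ne.symm ht1)), hβ, fun x ↦ ?_⟩
  have hγ : γ = t * β := by simp [t, hβ]
  rw [← sum_mul_pow_apply_eq_mul_sum_pow_two_mul ht2, Nat.two_mul_div_two_of_even heven]
  refine sum_congr rfl fun i hi ↦ ?_
  rw [hc i (mem_range.1 hi), hu1, hγ]

theorem linearizedMap_eq_mul_sum_pow_two_mul (hσ : ∀ τ, τ ∈ zpowers σ) {n : ℕ}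
    (hLn : finrank K L = n) (hn : 2 ≤ n) {a : ℕ → L} (hdeg : a (n - 2) ≠ 0) (h1 : a 1 = 0)
    (hker : finrank K (LinearMap.ker (linearizedMap σ a (n - 1))) = n - 2) :
    Even n ∧ ∃ α β : L, α ≠ 0 ∧ β ≠ 0 ∧ ∀ x,
      linearizedMap σ a (n - 1) x = α * ∑ k ∈ range (n / 2), (σ ^ (2 * k)) (β * x) := by
  set f := linearizedMap σ a (n - 1)
  have hrange : finrank K (LinearMap.range f) = 2 := by
    have := f.finrank_range_add_finrank_ker
    omega
  obtain ⟨u, v, β, γ, huv, hf⟩ := exists_linearIndependent_apply_eq_sum hσ f hrange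
  set c : ℕ → L := fun i ↦ if i < n - 1 then a i else 0
  have hfc (x : L) : f x = ∑ i ∈ range n, c i * (σ ^ i) x := by
    simp only [f, c, linearizedMap_apply, ite_mul, zero_mul]
    rw [sum_range_ite_lt _ (by omega)]
  have hc (i : ℕ) (hi : i < n) : c i = u * (σ ^ i) β + v * (σ ^ i) γ := by
    refine eq_of_forall_sum_mul_pow_apply_eq (d := fun i ↦ u * (σ ^ i) β + v * (σ ^ i) γ) hσ
      (fun x ↦ ?_) (hLn ▸ hi)
    rw [hLn, ← hfc, hf, hLn]
  obtain ⟨heven, α, β, hα, hβ, hx⟩ := even_and_exists_of_coeff_eq hσ hLn hn huv hc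
    (by simp [c, h1]) (by simp [c]) ⟨n - 2, by omega, by simpa [c, show n - 2 < n - 1 by omega]⟩
  exact ⟨heven, α, β, hα, hβ, fun x ↦ (hfc x).trans (hx x)⟩

end LinearizedMap

theorem finrank_eq_of_natCard_eq_pow {K V : Type*} [Field K] [Finite K] [AddCommGroup V]
    [Module K V] [Module.Finite K V] {d : ℕ} (h : Nat.card V = Nat.card K ^ d) :
    finrank K V = d :=
  Nat.pow_right_injective Finite.one_lt_card (Module.natCard_eq_pow_finrank.symm.trans h)

namespace FiniteField

theorem exists_subfield_natCard_eq {L : Type*} [Field L] [Fintype L] {q n : ℕ}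
    (hq : IsPrimePow q) (hL : Fintype.card L = q ^ n) : ∃ K : Subfield L, Nat.card K = q := by
  obtain ⟨p, e, hp, he, rfl⟩ := hq
  have := Fact.mk (Nat.prime_iff.2 hp)
  rw [← pow_mul] at hL
  have := charP_of_card_eq_prime_pow hL
  let _ : Algebra (ZMod p) L := ZMod.algebra L p
  have hfin : finrank (ZMod p) L = e * n := by
    apply finrank_eq_of_natCard_eq_pow
    rw [Nat.card_zmod, Nat.card_eq_fintype_card, hL]
  obtain ⟨ι⟩ := nonempty_algHom_of_finrank_dvd (F := ZMod p) (K := GaloisField p e) (L := L)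
    (by rw [GaloisField.finrank p he.ne', hfin]; exact dvd_mul_right e n)
  refine ⟨(ι : GaloisField p e →+* L).fieldRange, ?_⟩
  rw [← GaloisField.card p e he.ne']
  exact (Nat.card_eq_of_bijective _ (RingHom.rangeRestrictField_bijective _)).symm

variable {K L : Type*} [Field K] [Fintype K] [Field L] [Finite L] [Algebra K L]

theorem frobeniusAlgEquivOfAlgebraic_pow_apply (m : ℕ) (x : L) :
    (frobeniusAlgEquivOfAlgebraic K L ^ m) x = x ^ Fintype.card K ^ m := by
  rw [AlgEquiv.coe_pow, coe_frobeniusAlgEquivOfAlgebraic_iterate]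

theorem mem_zpowers_frobeniusAlgEquivOfAlgebraic_pow {s : ℕ} (hs : s.Coprime (finrank K L))
    (τ : Gal(L/K)) : τ ∈ zpowers (frobeniusAlgEquivOfAlgebraic K L ^ s) := by
  rw [zpowers_pow_eq_of_coprime (by rwa [orderOf_frobeniusAlgEquivOfAlgebraic])]
  obtain ⟨i, rfl⟩ := (bijective_frobeniusAlgEquivOfAlgebraic_pow K L).2 τ
  exact pow_mem (mem_zpowers _) _

theorem sum_range_frobeniusAlgEquivOfAlgebraic_pow_two_mul {s : ℕ}
    (hs : s.Coprime (finrank K L)) (heven : Even (finrank K L)) (y : L) :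
    ∑ k ∈ range (finrank K L / 2), ((frobeniusAlgEquivOfAlgebraic K L ^ s) ^ (2 * k)) y
      = ∑ k ∈ range (finrank K L / 2), y ^ Fintype.card K ^ (2 * k) := by
  set φ := frobeniusAlgEquivOfAlgebraic K L
  have horder : orderOf (φ ^ 2) = finrank K L / 2 := by
    rw [orderOf_pow_of_dvd two_ne_zero
      (by rw [orderOf_frobeniusAlgEquivOfAlgebraic]; exact heven.two_dvd),
      orderOf_frobeniusAlgEquivOfAlgebraic]
  have hs2 : s.Coprime (orderOf (φ ^ 2)) :=
    horder ▸ hs.coprime_dvd_right (Nat.div_dvd_of_dvd heven.two_dvd)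
  have hpow (k : ℕ) : (φ ^ s) ^ (2 * k) = ((φ ^ 2) ^ s) ^ k := by
    rw [← pow_mul, ← pow_mul, ← pow_mul, mul_left_comm]
  calc ∑ k ∈ range (finrank K L / 2), ((φ ^ s) ^ (2 * k)) y
      = ∑ k ∈ range (orderOf (φ ^ 2)), (((φ ^ 2) ^ s) ^ k) y := by simp only [horder, hpow]
    _ = ∑ k ∈ range (orderOf (φ ^ 2)), ((φ ^ 2) ^ k) y :=
      sum_range_orderOf_pow_pow_of_coprime hs2 fun τ ↦ τ y
    _ = _ := by simp only [horder, ← pow_mul, φ, frobeniusAlgEquivOfAlgebraic_pow_apply]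

end FiniteField

/-- Let `f` be a `q^s`-polynomial over `F_{q^n}` (`gcd(s,n) = 1`) of
`q^s`-degree `n-2` with kernel of `F_q`-dimension `n-2`. If the coefficient of `x^{q^s}`
is zero, then `n` is even and `f(x) = α · Tr_{q^n/q^2}(βx)` for some `α, β ∈ F_{q^n}^*`. -/
theorem stmt11 (q n s : ℕ) (hq : IsPrimePow q) (hn : 3 ≤ n) (hs : Nat.gcd s n = 1)
    (L : Type*) [Field L] [Fintype L] (hL : Fintype.card L = q ^ n)
    (a : ℕ → L) (hdeg : a (n - 2) ≠ 0) (h1 : a 1 = 0)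
    (hker : Set.ncard {x : L | ∑ i ∈ Finset.range (n - 1), a i * x ^ q ^ (s * i) = 0}
      = q ^ (n - 2)) :
    Even n ∧ ∃ α β : L, α ≠ 0 ∧ β ≠ 0 ∧
      ∀ x : L, ∑ i ∈ Finset.range (n - 1), a i * x ^ q ^ (s * i)
        = α * ∑ i ∈ Finset.range (n / 2), (β * x) ^ q ^ (2 * i) := by
  obtain ⟨K, hK⟩ := FiniteField.exists_subfield_natCard_eq hq hL
  let _ : Fintype K := Fintype.ofFinite K
  have hKq : Fintype.card K = q := by rw [Fintype.card_eq_nat_card, hK]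
  have hLn : finrank K L = n :=
    finrank_eq_of_natCard_eq_pow (by rw [hK, Nat.card_eq_fintype_card, hL])
  have hsn : s.Coprime (finrank K L) := hLn ▸ hs
  set σ := FiniteField.frobeniusAlgEquivOfAlgebraic K L ^ s
  have hf (x : L) : linearizedMap σ a (n - 1) x = ∑ i ∈ range (n - 1), a i * x ^ q ^ (s * i) := by
    simp only [linearizedMap_apply, σ, ← pow_mul,
      FiniteField.frobeniusAlgEquivOfAlgebraic_pow_apply, hKq]
  have hker' : finrank K (LinearMap.ker (linearizedMap σ a (n - 1))) = n - 2 := by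
    refine finrank_eq_of_natCard_eq_pow ?_
    rw [hK, ← hker, ← Nat.card_coe_set_eq]
    congr
    ext x
    simp [hf]
  obtain ⟨heven, α, β, hα, hβ, hx⟩ := linearizedMap_eq_mul_sum_pow_two_mul
    (FiniteField.mem_zpowers_frobeniusAlgEquivOfAlgebraic_pow hsn) hLn (by omega) hdeg h1 hker'
  refine ⟨heven, α, β, hα, hβ, fun x ↦ ?_⟩
  rw [← hf, hx, ← hLn,
    FiniteField.sum_range_frobeniusAlgEquivOfAlgebraic_pow_two_mul hsn (hLn ▸ heven), hKq]
end

section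
/- Let f(x) = a_0x + a_1x^q - x^{q^2} over F_{q^4} with a_1 ≠ 0. Then f has exactly q^2 roots in F_{q^4} if and only if N_{q^4/q}(a_0) = 1 and a_1^{q+1} = a_0^{q^2+q+1} - a_0^q. -/
open Polynomial

private lemma root_bound {L : Type*} [Field L] [DecidableEq L]
    (P : L[X]) (hP : P ≠ 0) (S : Set L) (h : ∀ x ∈ S, P.eval x = 0) :
    S.ncard ≤ P.natDegree := by
  have hsub : S ⊆ ↑P.roots.toFinset := by
    intro x hx
    simp only [Finset.mem_coe, Multiset.mem_toFinset, Polynomial.mem_roots hP]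
    exact h x hx
  calc S.ncard ≤ (↑P.roots.toFinset : Set L).ncard :=
        Set.ncard_le_ncard hsub (Set.toFinite _)
    _ = P.roots.toFinset.card := Set.ncard_coe_finset _
    _ ≤ Multiset.card P.roots := Multiset.toFinset_card_le _
    _ ≤ P.natDegree := Polynomial.card_roots' P

set_option maxHeartbeats 2000000 in
/-- `f(x) = a_0 x + a_1 x^q - x^{q^2}` over `F_{q^4}` with `a_1 ≠ 0` has
exactly `q^2` roots in `F_{q^4}` iff `N_{q^4/q}(a_0) = 1` and
`a_1^{q+1} = a_0^{q^2+q+1} - a_0^q`. -/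
theorem stmt13 (q : ℕ) (hq : IsPrimePow q)
    (L : Type*) [Field L] [Fintype L] (hL : Fintype.card L = q ^ 4)
    (a₀ a₁ : L) (ha₁ : a₁ ≠ 0) :
    Set.ncard {x : L | a₀ * x + a₁ * x ^ q - x ^ q ^ 2 = 0} = q ^ 2
      ↔ (a₀ ^ (1 + q + q ^ 2 + q ^ 3) = 1 ∧ a₁ ^ (q + 1) = a₀ ^ (q ^ 2 + q + 1) - a₀ ^ q) := by
  classical
  have hq2 : 2 ≤ q := hq.two_le
  have hq0 : q ≠ 0 := by omega
  -- Frobenius facts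
  have hfrob : (∀ x y : L, (x + y) ^ q = x ^ q + y ^ q) ∧
      (∀ x y : L, (x - y) ^ q = x ^ q - y ^ q) := by
    obtain ⟨r, k, hr, hk, rfl⟩ := hq
    have hrp : r.Prime := hr.nat_prime
    haveI : Fact r.Prime := ⟨hrp⟩
    obtain ⟨p, hcp⟩ := CharP.exists L
    haveI := hcp
    have hpp : p.Prime := CharP.char_is_prime L p
    obtain ⟨n, -, hcard⟩ := FiniteField.card L p
    have hpr : p = r := by
      have h1 : p ∣ (r ^ k) ^ 4 := by
        rw [← hL, hcard]; exact dvd_pow_self p n.2.ne'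
      rw [← pow_mul] at h1
      exact (Nat.prime_dvd_prime_iff_eq hpp hrp).mp (hpp.dvd_of_dvd_pow h1)
    subst hpr
    exact ⟨fun x y => add_pow_char_pow (p := p) (n := k) x y,
      fun x y => sub_pow_char_pow (p := p) (n := k) (x := x) (y := y)⟩
  obtain ⟨hfa, hfs⟩ := hfrob
  have hx4 : ∀ x : L, x ^ q ^ 4 = x := fun x => by rw [← hL]; exact FiniteField.pow_card x
  have hpw : ∀ (x : L) (m n : ℕ), m * q = n → (x ^ m) ^ q = x ^ n := by
    intro x m n h; rw [← pow_mul, h]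
  have hfneg : ∀ x : L, (-x) ^ q = -(x ^ q) := fun x => by
    rw [← zero_sub, hfs, zero_pow hq0, zero_sub]
  set S : Set L := {x : L | a₀ * x + a₁ * x ^ q - x ^ q ^ 2 = 0} with hSdef
  constructor
  · -- forward direction
    intro hC
    have hfin : S.Finite := Set.toFinite _
    have h1 : 1 < S.ncard := by rw [hC]; nlinarith
    obtain ⟨a, ha, b, hb, hab⟩ := (Set.one_lt_ncard hfin).mp h1
    obtain ⟨u, huS, hu0⟩ : ∃ u ∈ S, u ≠ 0 := by
      rcases eq_or_ne a 0 with h | h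
      · exact ⟨b, hb, fun hb0 => hab (h.trans hb0.symm)⟩
      · exact ⟨a, ha, h⟩
    obtain ⟨v, hvS, hD⟩ : ∃ v ∈ S, u * v ^ q - v * u ^ q ≠ 0 := by
      by_contra hcon
      push_neg at hcon
      have hco : (C (u ^ q) * X - C u * X ^ q).coeff 1 = u ^ q := by
        rw [coeff_sub, coeff_C_mul, coeff_C_mul, coeff_X_one, coeff_X_pow,
          if_neg (show ¬(1 : ℕ) = q by omega)]
        ring
      have hPne : (C (u ^ q) * X - C u * X ^ q) ≠ 0 := by
        intro h; rw [h] at hco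
        exact pow_ne_zero q hu0 (by simpa using hco.symm)
      have hdeg : (C (u ^ q) * X - C u * X ^ q).natDegree ≤ q := by
        compute_degree
        all_goals omega
      have hroots : ∀ x ∈ S, (C (u ^ q) * X - C u * X ^ q).eval x = 0 := by
        intro x hx
        simp only [eval_sub, eval_mul, eval_C, eval_X, eval_pow]
        linear_combination -(hcon x hx)
      have := (root_bound _ hPne S hroots).trans hdeg
      rw [hC] at this
      nlinarith
    have hu : a₀ * u + a₁ * u ^ q - u ^ q ^ 2 = 0 := huS
    have hv : a₀ * v + a₁ * v ^ q - v ^ q ^ 2 = 0 := hvS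
    set D : L := u * v ^ q - v * u ^ q with hDdef
    set E : L := u * v ^ q ^ 2 - v * u ^ q ^ 2 with hEdef
    have hDq : D ^ q = u ^ q * v ^ q ^ 2 - v ^ q * u ^ q ^ 2 := by
      rw [hDdef]
      simp only [hfs, mul_pow]
      rw [hpw v q (q ^ 2) (by ring), hpw u q (q ^ 2) (by ring)]
    have e0 : a₀ * D = -(D ^ q) := by
      rw [hDq, hDdef]; linear_combination v ^ q * hu - u ^ q * hv
    have e : ∀ i : ℕ, a₀ ^ q ^ i * D ^ q ^ i = -(D ^ q ^ (i + 1)) := by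
      intro i
      induction i with
      | zero => simpa using e0
      | succ n ih =>
        have h : (a₀ ^ q ^ n * D ^ q ^ n) ^ q = (-(D ^ q ^ (n + 1))) ^ q := by rw [ih]
        simp only [mul_pow, hfneg] at h
        rw [hpw a₀ (q ^ n) (q ^ (n + 1)) (by ring),
          hpw D (q ^ n) (q ^ (n + 1)) (by ring),
          hpw D (q ^ (n + 1)) (q ^ (n + 1 + 1)) (by ring)] at h
        exact h
    have f1 : a₁ * D = E := by
      rw [hDdef, hEdef]; linear_combination (-v) * hu + u * hv
    have f2 : a₁ ^ q * D ^ q = E ^ q := by rw [← mul_pow, f1]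
    have hEq : E ^ q = u ^ q * v ^ q ^ 3 - v ^ q * u ^ q ^ 3 := by
      rw [hEdef]
      simp only [hfs, mul_pow]
      rw [hpw v (q ^ 2) (q ^ 3) (by ring), hpw u (q ^ 2) (q ^ 3) (by ring)]
    have hDq2 : D ^ q ^ 2 = u ^ q ^ 2 * v ^ q ^ 3 - v ^ q ^ 2 * u ^ q ^ 3 := by
      rw [← hpw D q (q ^ 2) (by ring), hDq]
      simp only [hfs, mul_pow]
      rw [hpw u q (q ^ 2) (by ring), hpw v (q ^ 2) (q ^ 3) (by ring),
        hpw v q (q ^ 2) (by ring), hpw u (q ^ 2) (q ^ 3) (by ring)]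
    have hDq3 : D ^ q ^ 3 = u ^ q ^ 3 * v - v ^ q ^ 3 * u := by
      rw [← hpw D (q ^ 2) (q ^ 3) (by ring), hDq2]
      simp only [hfs, mul_pow]
      rw [hpw u (q ^ 2) (q ^ 3) (by ring), hpw v (q ^ 3) (q ^ 4) (by ring),
        hpw v (q ^ 2) (q ^ 3) (by ring), hpw u (q ^ 3) (q ^ 4) (by ring),
        hx4 u, hx4 v]
    have hPl : E ^ q * E = D ^ q ^ 2 * D - D ^ q ^ 3 * D ^ q := by
      rw [hEq, hDq2, hDq3, hDq, hDdef, hEdef]; ring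
    have hD4 : D ^ q ^ 4 = D := hx4 D
    have hDq1 : D ^ q ≠ 0 := pow_ne_zero _ hD
    have hDq2' : D ^ q ^ 2 ≠ 0 := pow_ne_zero _ hD
    have hDq3' : D ^ q ^ 3 ≠ 0 := pow_ne_zero _ hD
    constructor
    · refine mul_right_cancel₀ (mul_ne_zero (mul_ne_zero (mul_ne_zero hD hDq1) hDq2') hDq3') ?_
      linear_combination (a₀ ^ (q + q ^ 2 + q ^ 3) * D ^ q * D ^ q ^ 2 * D ^ q ^ 3) * e 0 -
        (a₀ ^ (q ^ 2 + q ^ 3) * D ^ q * D ^ q ^ 2 * D ^ q ^ 3) * e 1 +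
        (a₀ ^ q ^ 3 * D ^ q * D ^ q ^ 2 * D ^ q ^ 3) * e 2 -
        (D ^ q * D ^ q ^ 2 * D ^ q ^ 3) * e 3 + (D ^ q * D ^ q ^ 2 * D ^ q ^ 3) * hD4
    · refine mul_right_cancel₀ (mul_ne_zero (mul_ne_zero hD hDq1) hDq2') ?_
      linear_combination (a₁ ^ q * D ^ q * D ^ q ^ 2) * f1 + (E * D ^ q ^ 2) * f2 +
        D ^ q ^ 2 * hPl - (a₀ ^ (q + q ^ 2) * D ^ q * D ^ q ^ 2) * e 0 +
        (a₀ ^ q ^ 2 * D ^ q * D ^ q ^ 2 + D * D ^ q ^ 2) * e 1 -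
        (D ^ q * D ^ q ^ 2) * e 2
  · -- backward direction
    rintro ⟨hN, hA⟩
    have ha₀ : a₀ ≠ 0 := by
      intro h
      rw [h, zero_pow (by positivity)] at hN
      exact zero_ne_one hN
    obtain ⟨b₀, hbdef⟩ : ∃ b : L, b = a₀ ^ (q + q ^ 2 + q ^ 3) := ⟨_, rfl⟩
    have hb₀ : b₀ ≠ 0 := by rw [hbdef]; exact pow_ne_zero _ ha₀
    have K1 : a₀ * b₀ = 1 := by rw [hbdef]; linear_combination hN
    have hN0 : a₀ * a₀ ^ q * a₀ ^ q ^ 2 * a₀ ^ q ^ 3 = 1 := by linear_combination hN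
    have hA0 : a₁ ^ q * a₁ = a₀ ^ q ^ 2 * a₀ ^ q * a₀ - a₀ ^ q := by linear_combination hA
    have hA1 : a₁ ^ q ^ 2 * a₁ ^ q = a₀ ^ q ^ 3 * a₀ ^ q ^ 2 * a₀ ^ q - a₀ ^ q ^ 2 := by
      have h : (a₁ ^ q * a₁) ^ q = (a₀ ^ q ^ 2 * a₀ ^ q * a₀ - a₀ ^ q) ^ q := by rw [hA0]
      simp only [hfs, mul_pow] at h
      rw [hpw a₁ q (q ^ 2) (by ring),
        hpw a₀ (q ^ 2) (q ^ 3) (by ring), hpw a₀ q (q ^ 2) (by ring)] at h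
      linear_combination h
    have hA2 : a₁ ^ q ^ 3 * a₁ ^ q ^ 2 = a₀ * a₀ ^ q ^ 3 * a₀ ^ q ^ 2 - a₀ ^ q ^ 3 := by
      have h : (a₁ ^ q ^ 2 * a₁ ^ q) ^ q
          = (a₀ ^ q ^ 3 * a₀ ^ q ^ 2 * a₀ ^ q - a₀ ^ q ^ 2) ^ q := by rw [hA1]
      simp only [hfs, mul_pow] at h
      rw [hpw a₁ (q ^ 2) (q ^ 3) (by ring),
        hpw a₁ q (q ^ 2) (by ring), hpw a₀ (q ^ 3) (q ^ 4) (by ring),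
        hpw a₀ (q ^ 2) (q ^ 3) (by ring), hpw a₀ q (q ^ 2) (by ring), hx4 a₀] at h
      linear_combination h
    have hA3 : a₁ * a₁ ^ q ^ 3 = a₀ ^ q * a₀ * a₀ ^ q ^ 3 - a₀ := by
      have h : (a₁ ^ q ^ 3 * a₁ ^ q ^ 2) ^ q
          = (a₀ * a₀ ^ q ^ 3 * a₀ ^ q ^ 2 - a₀ ^ q ^ 3) ^ q := by rw [hA2]
      simp only [hfs, mul_pow] at h
      rw [hpw a₁ (q ^ 3) (q ^ 4) (by ring),
        hpw a₁ (q ^ 2) (q ^ 3) (by ring), hpw a₀ (q ^ 3) (q ^ 4) (by ring),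
        hpw a₀ (q ^ 2) (q ^ 3) (by ring), hx4 a₀, hx4 a₁] at h
      linear_combination h
    have hB1 : b₀ ^ q = a₀ ^ q ^ 2 * a₀ ^ q ^ 3 * a₀ := by
      have h1 : b₀ ^ q = a₀ ^ (q ^ 2 + q ^ 3 + q ^ 4) := by
        rw [hbdef, ← pow_mul]; congr 1; ring
      rw [h1, pow_add, pow_add, hx4 a₀]
    have hB2 : b₀ ^ q ^ 2 = a₀ ^ q ^ 3 * a₀ * a₀ ^ q := by
      have h5 : a₀ ^ q ^ 5 = a₀ ^ q := by
        rw [show q ^ 5 = q ^ 4 * q by ring, pow_mul, hx4]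
      have h1 : b₀ ^ q ^ 2 = a₀ ^ (q ^ 3 + q ^ 4 + q ^ 5) := by
        rw [hbdef, ← pow_mul]; congr 1; ring
      rw [h1, pow_add, pow_add, hx4 a₀, h5]
    have K2 : a₀ * a₁ ^ q ^ 2 + a₁ * b₀ ^ q = 0 := by
      have hcan : (a₀ * a₁ ^ q ^ 2 + a₁ * b₀ ^ q) * a₁ ^ q = 0 * a₁ ^ q := by
        rw [hB1]
        linear_combination a₀ * hA1 + (a₀ * a₀ ^ q ^ 2 * a₀ ^ q ^ 3) * hA0 +
          (a₀ * a₀ ^ q ^ 2) * hN0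
      exact mul_right_cancel₀ (pow_ne_zero q ha₁) hcan
    have K3 : a₀ + a₁ * a₁ ^ q ^ 3 - b₀ ^ q ^ 2 = 0 := by
      rw [hB2]; linear_combination hA3
    -- the image of g lands in S
    have hrange : ∀ x : L, x ^ q ^ 2 + a₁ ^ q ^ 2 * x ^ q + b₀ * x ∈ S := by
      intro x
      have hyq : (x ^ q ^ 2 + a₁ ^ q ^ 2 * x ^ q + b₀ * x) ^ q
          = x ^ q ^ 3 + a₁ ^ q ^ 3 * x ^ q ^ 2 + b₀ ^ q * x ^ q := by
        simp only [hfa, mul_pow]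
        rw [hpw x (q ^ 2) (q ^ 3) (by ring),
          hpw a₁ (q ^ 2) (q ^ 3) (by ring), hpw x q (q ^ 2) (by ring)]
      have hyq2 : (x ^ q ^ 2 + a₁ ^ q ^ 2 * x ^ q + b₀ * x) ^ q ^ 2
          = x + a₁ * x ^ q ^ 3 + b₀ ^ q ^ 2 * x ^ q ^ 2 := by
        rw [← hpw _ q (q ^ 2) (by ring), hyq]
        simp only [hfa, mul_pow]
        rw [hpw x (q ^ 3) (q ^ 4) (by ring), hpw a₁ (q ^ 3) (q ^ 4) (by ring),
          hpw x (q ^ 2) (q ^ 3) (by ring), hpw b₀ q (q ^ 2) (by ring),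
          hpw x q (q ^ 2) (by ring), hx4 x, hx4 a₁]
      show a₀ * _ + a₁ * _ - _ = 0
      rw [hyq, hyq2]
      linear_combination x * K1 + x ^ q * K2 + x ^ q ^ 2 * K3
    -- g as additive hom
    have hfa2 : ∀ x y : L, (x + y) ^ q ^ 2 = x ^ q ^ 2 + y ^ q ^ 2 := by
      intro x y
      rw [← hpw (x + y) q (q ^ 2) (by ring)]
      simp only [hfa]
      rw [hpw x q (q ^ 2) (by ring), hpw y q (q ^ 2) (by ring)]
    obtain ⟨g, hgdef⟩ : ∃ g : L →+ L, ∀ x : L, g x = x ^ q ^ 2 + a₁ ^ q ^ 2 * x ^ q + b₀ * x :=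
      ⟨{ toFun := fun x => x ^ q ^ 2 + a₁ ^ q ^ 2 * x ^ q + b₀ * x
         map_zero' := by simp [zero_pow hq0, zero_pow (pow_ne_zero 2 hq0)]
         map_add' := by
           intro x y
           rw [hfa2, hfa]; ring }, fun x => rfl⟩
    -- kernel bound
    have hkerb : (↑g.ker : Set L).ncard ≤ q ^ 2 := by
      have hco : (X ^ q ^ 2 + C (a₁ ^ q ^ 2) * X ^ q + C b₀ * X).coeff 1 = b₀ := by
        rw [coeff_add, coeff_add, coeff_X_pow, coeff_C_mul, coeff_X_pow, coeff_C_mul,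
          coeff_X_one, if_neg (show ¬(1:ℕ) = q^2 by nlinarith),
          if_neg (show ¬(1:ℕ) = q by omega)]
        ring
      have hPne : (X ^ q ^ 2 + C (a₁ ^ q ^ 2) * X ^ q + C b₀ * X) ≠ 0 := by
        intro h; rw [h] at hco; exact hb₀ (by simpa using hco.symm)
      have hdeg : (X ^ q ^ 2 + C (a₁ ^ q ^ 2) * X ^ q + C b₀ * X).natDegree ≤ q ^ 2 := by
        compute_degree
        all_goals (simp only [sup_le_iff]; constructor) <;> try constructor
        all_goals nlinarith
      refine (root_bound _ hPne _ ?_).trans hdeg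
      intro x hx
      have hx' : x ∈ g.ker := hx
      have hx0 : x ^ q ^ 2 + a₁ ^ q ^ 2 * x ^ q + b₀ * x = 0 := by
        rw [← hgdef x]; exact AddMonoidHom.mem_ker.mp hx'
      simp only [eval_add, eval_mul, eval_pow, eval_C, eval_X]
      linear_combination hx0
    -- S bound
    have hSb : S.ncard ≤ q ^ 2 := by
      have hco : (C a₀ * X + C a₁ * X ^ q - X ^ q ^ 2).coeff q = a₁ := by
        rw [coeff_sub, coeff_add, coeff_C_mul, coeff_C_mul, coeff_X, coeff_X_pow, coeff_X_pow,
          if_neg (show ¬(1:ℕ) = q by omega), if_neg (show ¬(q:ℕ) = q^2 by nlinarith),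
          if_pos rfl]
        ring
      have hPne : (C a₀ * X + C a₁ * X ^ q - X ^ q ^ 2) ≠ 0 := by
        intro h; rw [h] at hco; exact ha₁ (by simpa using hco.symm)
      have hdeg : (C a₀ * X + C a₁ * X ^ q - X ^ q ^ 2).natDegree ≤ q ^ 2 := by
        compute_degree
        all_goals (simp only [sup_le_iff]; constructor) <;> try constructor
        all_goals nlinarith
      refine (root_bound _ hPne _ ?_).trans hdeg
      intro x hx
      have hx0 : a₀ * x + a₁ * x ^ q - x ^ q ^ 2 = 0 := hx
      simp only [eval_sub, eval_add, eval_mul, eval_pow, eval_C, eval_X]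
      linear_combination hx0
    -- counting
    have hcard : Nat.card L = Nat.card (L ⧸ g.ker) * Nat.card g.ker :=
      AddSubgroup.card_eq_card_quotient_mul_card_addSubgroup g.ker
    have hquot : Nat.card (L ⧸ g.ker) = Nat.card g.range :=
      Nat.card_congr (QuotientAddGroup.quotientKerEquivRange g).toEquiv
    have hkn : Nat.card g.ker ≤ q ^ 2 := by
      rw [← Nat.card_coe_set_eq] at hkerb
      exact hkerb
    have hrn : Nat.card g.range = (Set.range g).ncard := by
      rw [← Nat.card_coe_set_eq]
      exact Nat.card_congr (Equiv.setCongr g.coe_range)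
    have hsub2 : Set.range g ⊆ S := by
      rintro y ⟨x, rfl⟩
      rw [hgdef x]; exact hrange x
    have hge : q ^ 2 ≤ (Set.range g).ncard := by
      have h4 : q ^ 4 = Nat.card (L ⧸ g.ker) * Nat.card g.ker := by
        rw [← hcard, Nat.card_eq_fintype_card, hL]
      have hle : q ^ 4 ≤ Nat.card (L ⧸ g.ker) * q ^ 2 :=
        h4.le.trans (Nat.mul_le_mul_left _ hkn)
      have h2 : q ^ 2 ≤ Nat.card (L ⧸ g.ker) := by
        have hq2pos : 0 < q ^ 2 := by positivity
        by_contra hlt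
        push_neg at hlt
        have := Nat.mul_lt_mul_of_lt_of_le hlt (le_refl (q ^ 2)) hq2pos
        nlinarith
      rw [hquot, hrn] at h2
      exact h2
    exact le_antisymm hSb (le_trans hge (Set.ncard_le_ncard hsub2 (Set.toFinite S)))
end

section
/- Let gcd(s,5)=1 and f(x) = a_0x + a_1x^{q^s} - x^{q^{2s}} over F_{q^5}. Then f has exactly q^2 roots in F_{q^5} if and only if N_{q^5/q}(a_0) = -1 and a_1^{q^s+1} + a_0^{q^s} = a_1^{q^{3s}}·a_0^{q^{2s}+q^s+1}. -/
/-!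
Put `σ x = x ^ q ^ s`; as `gcd(s, 5) = 1`, `σ` has order 5 and its fixed field is `𝔽_q`. A root `x`
of `f` gives the vector `(x, σ x)`, a fixed point of the `σ⁻¹`-semilinear map `τ v = σ⁻¹ (A v)` on
`L²`, where `A` is the companion matrix of `f`. The fixed points of `τ` form an `𝔽_q`-space of
dimension at most 2, and by Dedekind's independence of `1, σ, …, σ⁴` the dimension is 2 exactly
when `τ⁵ = id`. Finally `τ⁵` is multiplication by the twisted product `σ⁴(A) ⋯ σ(A) A`, and
comparing its entries with those of the identity gives the two conditions.
-/

open Finset Function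

theorem Finset.prod_range_mul_mod {M : Type*} [CommMonoid M] (f : ℕ → M) {n s : ℕ}
    (hs : s.Coprime n) : ∏ i ∈ range n, f (s * i % n) = ∏ i ∈ range n, f i := by
  rcases n.eq_zero_or_pos with rfl | hn
  · simp
  have hmaps : Set.MapsTo (fun i => s * i % n) (range n) (range n) :=
    fun i _ => mem_range.2 (Nat.mod_lt _ hn)
  have hinj : Set.InjOn (fun i => s * i % n) (range n) := fun i hi j hj hij =>
    (Nat.ModEq.cancel_left_of_coprime (Nat.coprime_comm.1 hs) hij).eq_of_lt_of_lt
      (mem_range.1 hi) (mem_range.1 hj)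
  exact prod_nbij _ hmaps hinj (surjOn_of_injOn_of_card_le _ hmaps hinj le_rfl) fun _ _ => rfl

theorem prod_range_pow_pow_smul {G M : Type*} [Monoid G] [CommMonoid M] [MulAction G M]
    (g : G) {s : ℕ} (hs : s.Coprime (orderOf g)) (a : M) :
    ∏ i ∈ range (orderOf g), (g ^ s) ^ i • a = ∏ i ∈ range (orderOf g), g ^ i • a := by
  simp_rw [← pow_mul, ← pow_mod_orderOf g (s * _)]
  exact prod_range_mul_mod (fun i => g ^ i • a) hs

section GroupAction

variable {G L : Type*} [Group G] [Field L] [MulSemiringAction G L]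

theorem natCard_eq_ncard_fixed_pow_orderOf [FaithfulSMul G L] {ρ : G}
    (hρ : 0 < orderOf ρ) : Nat.card L = {c : L | ρ • c = c}.ncard ^ orderOf ρ := by
  have hK : (FixedPoints.subfield (Subgroup.zpowers ρ) L : Set L) = {c : L | ρ • c = c} := by
    ext c
    change (∀ g : Subgroup.zpowers ρ, g • c = c) ↔ ρ • c = c
    refine ⟨fun h => h ⟨ρ, Subgroup.mem_zpowers ρ⟩, ?_⟩
    rintro h ⟨g, j, rfl⟩
    exact MulAction.mem_fixedBy_zpow h j
  have : Finite (Subgroup.zpowers ρ) :=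
    Nat.finite_of_card_ne_zero (Nat.card_zpowers ρ ▸ hρ.ne')
  have := Fintype.ofFinite (Subgroup.zpowers ρ)
  rw [Module.natCard_eq_pow_finrank (K := FixedPoints.subfield (Subgroup.zpowers ρ) L),
    FixedPoints.finrank_eq_card, Fintype.card_eq_nat_card, Nat.card_zpowers, ← hK]
  exact congrArg (· ^ orderOf ρ) (Nat.card_coe_set_eq _)

theorem eq_zero_of_forall_sum_mul_pow_smul_eq_zero [FaithfulSMul G L] {ρ : G} {k : ℕ → L}
    (h : ∀ c : L, ∑ i ∈ range (orderOf ρ), k i * (ρ ^ i) • c = 0) {i : ℕ}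
    (hi : i < orderOf ρ) : k i = 0 := by
  let χ : Fin (orderOf ρ) → L →* L := fun j => MulSemiringAction.toRingHom G L (ρ ^ (j : ℕ))
  have hχ : Injective χ := fun j j' hjj' => Fin.ext <| pow_injOn_Iio_orderOf j.2 j'.2 <|
    FaithfulSMul.eq_of_smul_eq_smul fun c => DFunLike.congr_fun hjj' c
  have hind := (linearIndependent_monoidHom L L).comp χ hχ
  rw [Fintype.linearIndependent_iff] at hind
  refine hind (fun j => k j) (funext fun c => ?_) ⟨i, hi⟩
  simpa [χ, Fin.sum_univ_eq_sum_range (fun j => k j * (ρ ^ j) • c)] using h c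

end GroupAction

section Semilinear

variable {G L V : Type*} [Group G] [Field L] [MulSemiringAction G L] [AddCommGroup V]
  [Module L V] {ρ : G} (τ : V →ₛₗ[MulSemiringAction.toRingHom G L ρ] V)

theorem iterate_map_smul_of_semilinear (n : ℕ) (c : L) (w : V) :
    τ^[n] (c • w) = ((ρ ^ n) • c) • τ^[n] w := by
  induction n with
  | zero => simp
  | succ n ih =>
    rw [iterate_succ_apply', ih, map_smulₛₗ, iterate_succ_apply', pow_succ', mul_smul,
      MulSemiringAction.toRingHom_apply]

theorem map_sum_range_iterate {n : ℕ} (hτ : τ^[n] = id) (w : V) :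
    τ (∑ i ∈ range n, τ^[i] w) = ∑ i ∈ range n, τ^[i] w := by
  cases n with
  | zero => simp
  | succ n =>
    conv_lhs => rw [map_sum, sum_range_succ]
    conv_rhs => rw [sum_range_succ']
    simp only [← iterate_succ_apply' τ, hτ, iterate_zero, id]

theorem exists_fixed_apply_ne_zero [FaithfulSMul G L] (hρ : 0 < orderOf ρ)
    (hτ : τ^[orderOf ρ] = id) {ℓ : V →ₗ[L] L} (hℓ : ℓ ≠ 0) : ∃ v, τ v = v ∧ ℓ v ≠ 0 := by
  by_contra! hfix
  obtain ⟨w, hw⟩ : ∃ w, ℓ w ≠ 0 := by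
    by_contra! h
    exact hℓ (LinearMap.ext h)
  -- `∑ τ^[i] (c • w)` is fixed for every `c`, so Dedekind's lemma forces `ℓ w = 0`
  have htrace : ∀ c : L, ∑ i ∈ range (orderOf ρ), ℓ (τ^[i] w) * (ρ ^ i) • c = 0 := fun c => by
    simpa [map_sum, iterate_map_smul_of_semilinear, mul_comm] using
      hfix _ (map_sum_range_iterate τ hτ (c • w))
  exact hw (by simpa using eq_zero_of_forall_sum_mul_pow_smul_eq_zero htrace hρ)

end Semilinear

section Plane

variable {L : Type*} [Field L]

theorem exists_smul_add_smul_eq {u v : L × L} (hd : u.1 * v.2 - u.2 * v.1 ≠ 0) (w : L × L) :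
    ∃ k m : L, k • u + m • v = w :=
  ⟨(w.1 * v.2 - w.2 * v.1) / (u.1 * v.2 - u.2 * v.1),
    (u.1 * w.2 - u.2 * w.1) / (u.1 * v.2 - u.2 * v.1), by
      ext <;>
      simp only [Prod.fst_add, Prod.snd_add, Prod.smul_fst, Prod.smul_snd, smul_eq_mul] <;>
      rw [div_mul_eq_mul_div, div_mul_eq_mul_div, ← add_div, div_eq_iff hd] <;> ring⟩

theorem smul_add_smul_inj {u v : L × L} (hd : u.1 * v.2 - u.2 * v.1 ≠ 0) {k m k' m' : L} :
    k • u + m • v = k' • u + m' • v ↔ k = k' ∧ m = m' := by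
  refine ⟨fun h => ?_, fun ⟨hk, hm⟩ => hk ▸ hm ▸ rfl⟩
  simp only [Prod.ext_iff, Prod.fst_add, Prod.snd_add, Prod.smul_fst, Prod.smul_snd,
    smul_eq_mul] at h
  constructor
  · refine mul_right_cancel₀ hd ?_
    linear_combination v.2 * h.1 - v.1 * h.2
  · refine mul_right_cancel₀ hd ?_
    linear_combination u.1 * h.2 - u.2 * h.1

theorem exists_eq_smul_of_det_eq_zero {u w : L × L} (hu : u ≠ 0)
    (hd : u.1 * w.2 - u.2 * w.1 = 0) : ∃ c : L, w = c • u := by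
  by_cases h1 : u.1 = 0
  · have h2 : u.2 ≠ 0 := fun h2 => hu (Prod.ext h1 h2)
    refine ⟨w.2 / u.2, Prod.ext ?_ ?_⟩ <;>
      simp only [Prod.smul_fst, Prod.smul_snd, smul_eq_mul] <;> field_simp
    linear_combination -hd
  · refine ⟨w.1 / u.1, Prod.ext ?_ ?_⟩ <;>
      simp only [Prod.smul_fst, Prod.smul_snd, smul_eq_mul] <;> field_simp
    linear_combination hd

variable {G : Type*} [Group G] [MulSemiringAction G L] {ρ : G}
  (τ : L × L →ₛₗ[MulSemiringAction.toRingHom G L ρ] L × L)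

theorem fixed_eq_image_of_det_ne_zero {u v : L × L} (hu : τ u = u) (hv : τ v = v)
    (hd : u.1 * v.2 - u.2 * v.1 ≠ 0) :
    {w | τ w = w} =
      (fun km : L × L => km.1 • u + km.2 • v) '' ({c | ρ • c = c} ×ˢ {c | ρ • c = c}) := by
  have hτ : ∀ k m : L, τ (k • u + m • v) = (ρ • k) • u + (ρ • m) • v := fun k m => by
    simp [hu, hv]
  ext w
  obtain ⟨k, m, rfl⟩ := exists_smul_add_smul_eq hd w
  simp only [Set.mem_ofPred_eq, Set.mem_image, Set.mem_prod, hτ]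
  constructor
  · intro h
    exact ⟨(k, m), (smul_add_smul_inj hd).1 h, rfl⟩
  · rintro ⟨⟨k', m'⟩, ⟨hk, hm⟩, h⟩
    obtain ⟨rfl, rfl⟩ := (smul_add_smul_inj hd).1 h
    simp only at hk hm
    rw [hk, hm]

theorem iterate_orderOf_eq_id_of_det_ne_zero {u v : L × L} (hu : τ u = u) (hv : τ v = v)
    (hd : u.1 * v.2 - u.2 * v.1 ≠ 0) : τ^[orderOf ρ] = id := by
  funext w
  obtain ⟨k, m, rfl⟩ := exists_smul_add_smul_eq hd w
  simp only [iterate_map_add, iterate_map_smul_of_semilinear, iterate_fixed hu,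
    iterate_fixed hv, pow_orderOf_eq_one, one_smul, id]

theorem ncard_fixed_le_of_det_eq_zero [Finite L]
    (h : ∀ u v, τ u = u → τ v = v → u.1 * v.2 - u.2 * v.1 = 0) :
    {w | τ w = w}.ncard ≤ {c : L | ρ • c = c}.ncard := by
  by_cases h0 : ∀ u, τ u = u → u = 0
  · calc {w | τ w = w}.ncard ≤ ({0} : Set (L × L)).ncard :=
          Set.ncard_le_ncard (fun w hw => h0 w hw) (Set.finite_singleton 0)
      _ = ({0} : Set L).ncard := by simp
      _ ≤ {c : L | ρ • c = c}.ncard :=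
          Set.ncard_le_ncard (by simp) (Set.toFinite _)
  push Not at h0
  obtain ⟨u, hu, hu0⟩ := h0
  have hsub : {w | τ w = w} ⊆ (· • u) '' {c : L | ρ • c = c} := by
    intro w hw
    obtain ⟨c, rfl⟩ := exists_eq_smul_of_det_eq_zero hu0 (h u w hu hw)
    refine ⟨c, smul_left_injective L hu0 ?_, rfl⟩
    simpa [hu] using hw
  exact (Set.ncard_le_ncard hsub (Set.toFinite _)).trans (Set.ncard_image_le (Set.toFinite _))

theorem exists_fixed_det_ne_zero [FaithfulSMul G L] (hρ : 0 < orderOf ρ)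
    (hτ : τ^[orderOf ρ] = id) :
    ∃ u v, τ u = u ∧ τ v = v ∧ u.1 * v.2 - u.2 * v.1 ≠ 0 := by
  obtain ⟨u, hu, hu1⟩ := exists_fixed_apply_ne_zero τ hρ hτ (ℓ := LinearMap.fst L L L)
    fun h => by simpa using LinearMap.congr_fun h (1, 0)
  obtain ⟨v, hv, hv'⟩ := exists_fixed_apply_ne_zero τ hρ hτ
    (ℓ := u.1 • LinearMap.snd L L L - u.2 • LinearMap.fst L L L)
    fun h => hu1 (by simpa using LinearMap.congr_fun h (0, 1))
  exact ⟨u, v, hu, hv, by simpa using hv'⟩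

theorem ncard_fixed_eq_sq_iff [Finite L] [FaithfulSMul G L] (hρ : 0 < orderOf ρ) :
    {v | τ v = v}.ncard = {c : L | ρ • c = c}.ncard ^ 2 ↔ τ^[orderOf ρ] = id := by
  by_cases h : ∃ u v, τ u = u ∧ τ v = v ∧ u.1 * v.2 - u.2 * v.1 ≠ 0
  · obtain ⟨u, v, hu, hv, hd⟩ := h
    refine iff_of_true ?_ (iterate_orderOf_eq_id_of_det_ne_zero τ hu hv hd)
    rw [fixed_eq_image_of_det_ne_zero τ hu hv hd,
      Set.ncard_image_of_injective _
        fun _ _ h => Prod.ext_iff.2 ((smul_add_smul_inj hd).1 h), Set.ncard_prod, sq]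
  · refine iff_of_false (fun hcard => ?_) (fun hτ => h (exists_fixed_det_ne_zero τ hρ hτ))
    push Not at h
    have hK : 2 ≤ {c : L | ρ • c = c}.ncard :=
      (Set.ncard_pair zero_ne_one).symm.le.trans
        (Set.ncard_le_ncard (by simp [Set.insert_subset_iff]) (Set.toFinite _))
    have := hcard ▸ ncard_fixed_le_of_det_eq_zero τ h
    nlinarith

theorem iterate_eq_id_iff_of_pow_eq_one {n : ℕ} (hρ : ρ ^ n = 1) :
    τ^[n] = id ↔ τ^[n] (1, 0) = (1, 0) ∧ τ^[n] (0, 1) = (0, 1) := by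
  refine ⟨fun h => by simp [h], fun ⟨h₁, h₂⟩ => funext fun ⟨x, y⟩ => ?_⟩
  have hxy : ((x, y) : L × L) = x • (1, 0) + y • (0, 1) := by simp
  rw [hxy, iterate_map_add, iterate_map_smul_of_semilinear, iterate_map_smul_of_semilinear, hρ,
    one_smul, one_smul, h₁, h₂, id]

end Plane

section Companion

variable {G L : Type*} [Group G] [Field L] [MulSemiringAction G L]

def companionSemilinear (ρ : G) (a₀ a₁ : L) :
    L × L →ₛₗ[MulSemiringAction.toRingHom G L ρ] L × L where
  toFun v := (ρ • v.2, ρ • (a₀ * v.1 + a₁ * v.2))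
  map_add' u v := by
    ext <;> simp only [Prod.fst_add, Prod.snd_add, mul_add, smul_add]
    abel
  map_smul' c v := by
    ext <;> simp only [Prod.smul_fst, Prod.smul_snd, smul_eq_mul, smul_mul',
      MulSemiringAction.toRingHom_apply]
    rw [mul_left_comm, mul_left_comm a₁, ← mul_add, smul_mul']

@[simp]
theorem companionSemilinear_apply (ρ : G) (a₀ a₁ : L) (v : L × L) :
    companionSemilinear ρ a₀ a₁ v = (ρ • v.2, ρ • (a₀ * v.1 + a₁ * v.2)) :=
  rfl

theorem fixed_companionSemilinear_inv (σ : G) (a₀ a₁ : L) :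
    {v | companionSemilinear σ⁻¹ a₀ a₁ v = v} =
      (fun x => (x, σ • x)) '' {x | a₀ * x + a₁ * σ • x - (σ ^ 2) • x = 0} := by
  ext ⟨x, y⟩
  simp only [Set.mem_ofPred_eq, companionSemilinear_apply, Prod.mk.injEq, inv_smul_eq_iff,
    Set.mem_image, sq, mul_smul]
  constructor
  · rintro ⟨rfl, h⟩
    exact ⟨x, by rw [← h]; ring, rfl, rfl⟩
  · rintro ⟨x, h, rfl, rfl⟩
    exact ⟨rfl, by linear_combination h⟩

section FiveCycle

variable (σ : G) {c b : ℕ → L}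

/-- The two pairs are the columns of `σ⁴(A) ⋯ σ(A) A`, where `σⁱ(A) = !![0, 1; c i, b i]`. -/
theorem companionSemilinear_inv_iterate_five_apply (hc : ∀ i, σ • c i = c (i + 1))
    (hb : ∀ i, σ • b i = b (i + 1)) (hc5 : c 5 = c 0) (hb5 : b 5 = b 0) :
    (companionSemilinear σ⁻¹ (c 0) (b 0))^[5] (1, 0) =
        (c 3 * b 1 * c 0 + b 3 * c 2 * c 0 + b 3 * b 2 * b 1 * c 0,
          c 4 * (c 2 * c 0 + b 2 * b 1 * c 0) +
            b 4 * (c 3 * b 1 * c 0 + b 3 * c 2 * c 0 + b 3 * b 2 * b 1 * c 0)) ∧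
      (companionSemilinear σ⁻¹ (c 0) (b 0))^[5] (0, 1) =
        (c 3 * c 1 + c 3 * b 1 * b 0 + b 3 * c 2 * b 0 + b 3 * b 2 * c 1 + b 3 * b 2 * b 1 * b 0,
          c 4 * (c 2 * b 0 + b 2 * c 1 + b 2 * b 1 * b 0) +
            b 4 * (c 3 * c 1 + c 3 * b 1 * b 0 + b 3 * c 2 * b 0 + b 3 * b 2 * c 1 +
              b 3 * b 2 * b 1 * b 0)) := by
  have hc' : ∀ i, σ⁻¹ • c (i + 1) = c i := fun i => inv_smul_eq_iff.2 (hc i).symm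
  have hb' : ∀ i, σ⁻¹ • b (i + 1) = b i := fun i => inv_smul_eq_iff.2 (hb i).symm
  have hc0 : σ⁻¹ • c 0 = c 4 := by rw [← hc5, hc' 4]
  have hb0 : σ⁻¹ • b 0 = b 4 := by rw [← hb5, hb' 4]
  simp only [iterate_succ_apply', iterate_zero, id, companionSemilinear_apply, smul_add,
    smul_mul', smul_zero, smul_one, mul_zero, mul_one, add_zero, zero_add, hc0, hb0,
    hc' 0, hc' 1, hc' 2, hc' 3, hb' 0, hb' 1, hb' 2, hb' 3]
  constructor <;> ext <;> ring

theorem twistedProduct_eq_one_iff (hc : ∀ i, σ • c i = c (i + 1)) (hb : ∀ i, σ • b i = b (i + 1))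
    (hc5 : ∀ i, c (i + 5) = c i) (hb5 : ∀ i, b (i + 5) = b i) :
    ((c 3 * b 1 * c 0 + b 3 * c 2 * c 0 + b 3 * b 2 * b 1 * c 0,
          c 4 * (c 2 * c 0 + b 2 * b 1 * c 0) +
            b 4 * (c 3 * b 1 * c 0 + b 3 * c 2 * c 0 + b 3 * b 2 * b 1 * c 0)) = (1, 0) ∧
      (c 3 * c 1 + c 3 * b 1 * b 0 + b 3 * c 2 * b 0 + b 3 * b 2 * c 1 + b 3 * b 2 * b 1 * b 0,
          c 4 * (c 2 * b 0 + b 2 * c 1 + b 2 * b 1 * b 0) +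
            b 4 * (c 3 * c 1 + c 3 * b 1 * b 0 + b 3 * c 2 * b 0 + b 3 * b 2 * c 1 +
              b 3 * b 2 * b 1 * b 0)) = (0, 1)) ↔
      c 0 * c 1 * c 2 * c 3 * c 4 = -1 ∧ c 1 + b 1 * b 0 = b 3 * (c 2 * c 1 * c 0) := by
  have shift : ∀ i, c (i + 1) + b (i + 1) * b i = b (i + 3) * (c (i + 2) * c (i + 1) * c i) →
      c (i + 2) + b (i + 2) * b (i + 1) = b (i + 4) * (c (i + 3) * c (i + 2) * c (i + 1)) :=
    fun i h => by simpa only [smul_add, smul_mul', hc, hb, add_assoc] using congrArg (σ • ·) h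
  simp only [Prod.mk.injEq]
  constructor
  · rintro ⟨⟨e1, e3⟩, e2, e4⟩
    have hA : c 0 * c 1 * c 2 * c 3 * c 4 = -1 := by
      linear_combination (c 4 * (c 2 * c 0 + b 2 * b 1 * c 0) + b 4) * e2 -
        c 4 * (c 2 * b 0 + b 2 * c 1 + b 2 * b 1 * b 0) * e1 - e4
    have h40 : c 4 * c 0 ≠ 0 := fun h => by
      have : c 0 * c 1 * c 2 * c 3 * c 4 = 0 := by linear_combination c 1 * c 2 * c 3 * h
      exact neg_ne_zero.2 one_ne_zero (hA ▸ this)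
    have hB₁ : c 2 + b 2 * b 1 = b 4 * (c 3 * c 2 * c 1) :=
      mul_left_cancel₀ h40 (by linear_combination e3 - b 4 * e1 - b 4 * hA)
    have hB₅ : c 6 + b 6 * b 5 = b 8 * (c 7 * c 6 * c 5) :=
      shift 4 (shift 3 (shift 2 (shift 1 hB₁)))
    refine ⟨hA, ?_⟩
    rwa [show c 5 = c 0 from hc5 0, show c 6 = c 1 from hc5 1, show c 7 = c 2 from hc5 2,
      show b 5 = b 0 from hb5 0, show b 6 = b 1 from hb5 1, show b 8 = b 3 from hb5 3] at hB₅
  · rintro ⟨hA, hB⟩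
    have hB₁ : c 2 + b 2 * b 1 = b 4 * (c 3 * c 2 * c 1) := shift 0 hB
    have hB₂ : c 3 + b 3 * b 2 = b 5 * (c 4 * c 3 * c 2) := shift 1 hB₁
    have hB₃ : c 4 + b 4 * b 3 = b 6 * (c 5 * c 4 * c 3) := shift 2 hB₂
    rw [show b 5 = b 0 from hb5 0] at hB₂
    rw [show b 6 = b 1 from hb5 1, show c 5 = c 0 from hc5 0] at hB₃
    refine ⟨⟨?_, ?_⟩, ?_, ?_⟩
    · linear_combination c 0 * b 3 * hB₁ + c 0 * c 1 * c 2 * c 3 * hB₃ +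
        (c 0 * c 3 * b 1 - 1) * hA
    · linear_combination (c 4 * c 0 + b 4 * b 3 * c 0) * hB₁ +
        b 4 * c 0 * c 1 * c 2 * c 3 * hB₃ + b 4 * c 0 * c 3 * b 1 * hA
    · linear_combination (c 3 + b 3 * b 2) * hB + b 3 * c 2 * c 1 * c 0 * hB₂ +
        b 3 * c 2 * b 0 * hA
    · linear_combination (c 4 * b 2 + b 4 * (c 3 + b 3 * b 2)) * hB +
        (c 4 * c 2 * c 1 * c 0 + b 4 * b 3 * c 2 * c 1 * c 0) * hB₂ +
        (c 4 * c 2 * b 0 - 1 + b 4 * b 3 * c 2 * b 0) * hA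

end FiveCycle

theorem companionSemilinear_inv_iterate_five_eq_id_iff {σ : G} (hσ : σ ^ 5 = 1) (a₀ a₁ : L) :
    (companionSemilinear σ⁻¹ a₀ a₁)^[5] = id ↔
      ∏ i ∈ range 5, (σ ^ i) • a₀ = -1 ∧
        σ • a₀ + σ • a₁ * a₁ = (σ ^ 3) • a₁ * ((σ ^ 2) • a₀ * σ • a₀ * a₀) := by
  have hc : ∀ (a : L) i, σ • (σ ^ i) • a = (σ ^ (i + 1)) • a := fun a i => by
    rw [smul_smul, pow_succ']
  have hc5 : ∀ (a : L) i, (σ ^ (i + 5)) • a = (σ ^ i) • a := fun a i => by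
    rw [pow_add, hσ, mul_one]
  have hiter :=
    companionSemilinear_inv_iterate_five_apply σ (hc a₀) (hc a₁) (hc5 a₀ 0) (hc5 a₁ 0)
  have hentries := twistedProduct_eq_one_iff σ (hc a₀) (hc a₁) (hc5 a₀) (hc5 a₁)
  simp only [pow_zero, pow_one, one_smul] at hiter hentries
  rw [iterate_eq_id_iff_of_pow_eq_one _ (by rw [inv_pow, hσ, inv_one]), hiter.1, hiter.2,
    hentries]
  simp [prod_range_succ, mul_assoc]

theorem ncard_roots_eq_sq_iff [Finite L] [FaithfulSMul G L] {σ : G} (hσ : orderOf σ = 5)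
    (a₀ a₁ : L) :
    {x | a₀ * x + a₁ * σ • x - (σ ^ 2) • x = 0}.ncard = {c : L | σ • c = c}.ncard ^ 2 ↔
      ∏ i ∈ range 5, (σ ^ i) • a₀ = -1 ∧
        σ • a₀ + σ • a₁ * a₁ = (σ ^ 3) • a₁ * ((σ ^ 2) • a₀ * σ • a₀ * a₀) := by
  have hfix : {c : L | σ⁻¹ • c = c} = {c | σ • c = c} :=
    Set.ext fun _ => inv_smul_eq_iff.trans eq_comm
  have hinj : Injective fun x : L => (x, σ • x) := fun _ _ h => congrArg Prod.fst h
  rw [← Set.ncard_image_of_injective _ hinj,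
    ← fixed_companionSemilinear_inv, ← hfix,
    ncard_fixed_eq_sq_iff _ (by rw [orderOf_inv, hσ]; norm_num), orderOf_inv, hσ,
    companionSemilinear_inv_iterate_five_eq_id_iff (hσ ▸ pow_orderOf_eq_one σ)]

end Companion

section FiniteField

variable {L : Type*} [Field L] [Fintype L]

theorem exists_ringAut_frobenius {q n : ℕ} (hq : IsPrimePow q) (hL : Fintype.card L = q ^ n) :
    ∃ φ : RingAut L, (∀ x : L, φ • x = x ^ q) ∧ orderOf φ = n := by
  obtain ⟨p, e, hp, he, rfl⟩ := hq
  have hp' := Fact.mk (Nat.prime_iff.2 hp)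
  have : CharP L p := charP_of_card_eq_prime_pow (hL.trans (pow_mul p e n).symm)
  let := ZMod.algebra L p
  let F := FiniteField.frobeniusAlgEquivOfAlgebraic (ZMod p) L
  have hF : orderOf F = e * n := by
    rw [FiniteField.orderOf_frobeniusAlgEquivOfAlgebraic]
    refine Nat.pow_right_injective hp'.out.two_le ?_
    have := Module.card_eq_pow_finrank (K := ZMod p) (V := L)
    rw [ZMod.card, hL] at this
    simp only [← this, pow_mul]
  have hinj : Injective (MulSemiringAction.toRingAut (L ≃ₐ[ZMod p] L) L) := fun f g h =>
    AlgEquiv.ext fun x => RingEquiv.congr_fun h x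
  refine ⟨MulSemiringAction.toRingAut _ L (F ^ e), fun x => ?_, ?_⟩
  · simp [F, AlgEquiv.coe_pow, FiniteField.coe_frobeniusAlgEquivOfAlgebraic_iterate, ZMod.card]
  · rw [orderOf_injective _ hinj, orderOf_pow' _ he.ne', hF, Nat.gcd_mul_right_left,
      Nat.mul_div_cancel_left _ he]

theorem exists_ringAut_frobenius_pow {q n s : ℕ} (hq : IsPrimePow q)
    (hL : Fintype.card L = q ^ n) (hn : 0 < n) (hs : s.Coprime n) :
    ∃ σ : RingAut L, (∀ k (x : L), (σ ^ k) • x = x ^ q ^ (k * s)) ∧ orderOf σ = n ∧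
      {c : L | σ • c = c}.ncard = q ∧
      ∀ a : L, ∏ i ∈ range n, (σ ^ i) • a = a ^ ∑ i ∈ range n, q ^ i := by
  obtain ⟨φ, hφ, hφn⟩ := exists_ringAut_frobenius hq hL
  have hφk : ∀ k (x : L), (φ ^ k) • x = x ^ q ^ k := by
    intro k
    induction k with
    | zero => simp
    | succ k ih => intro x; rw [pow_succ, mul_smul, hφ, ih, ← pow_mul, pow_succ']
  have hσn : orderOf (φ ^ s) = n := by rw [Nat.Coprime.orderOf_pow (hφn ▸ hs.symm), hφn]
  refine ⟨φ ^ s, fun k x => by rw [← pow_mul, hφk, mul_comm], hσn, ?_, fun a => ?_⟩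
  · have hcard := natCard_eq_ncard_fixed_pow_orderOf (L := L) (hσn ▸ hn)
    rw [hσn, Nat.card_eq_fintype_card, hL] at hcard
    exact (Nat.pow_left_injective hn.ne' hcard).symm
  · rw [← hφn, prod_range_pow_pow_smul φ (hφn ▸ hs) a, hφn]
    simp only [hφk]
    exact prod_pow_eq_pow_sum _ _ _

end FiniteField

/-- For `gcd(s,5) = 1`, `f(x) = a_0 x + a_1 x^{q^s} - x^{q^{2s}}` over
`F_{q^5}` has exactly `q^2` roots iff `N_{q^5/q}(a_0) = -1` and
`a_1^{q^s+1} + a_0^{q^s} = a_1^{q^{3s}}·a_0^{q^{2s}+q^s+1}`. -/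
theorem stmt15 (q s : ℕ) (hq : IsPrimePow q) (hs : Nat.gcd s 5 = 1)
    (L : Type*) [Field L] [Fintype L] (hL : Fintype.card L = q ^ 5)
    (a₀ a₁ : L) :
    Set.ncard {x : L | a₀ * x + a₁ * x ^ q ^ s - x ^ q ^ (2 * s) = 0} = q ^ 2
      ↔ (a₀ ^ (1 + q + q ^ 2 + q ^ 3 + q ^ 4) = -1 ∧
         a₁ ^ (q ^ s + 1) + a₀ ^ q ^ s = a₁ ^ q ^ (3 * s) * a₀ ^ (q ^ (2 * s) + q ^ s + 1)) := by
  obtain ⟨σ, hσ, hσ5, hK, hnorm⟩ := exists_ringAut_frobenius_pow hq hL (by norm_num) hs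
  have hσ1 : ∀ x : L, σ • x = x ^ q ^ s := fun x => by simpa using hσ 1 x
  have key := ncard_roots_eq_sq_iff hσ5 a₀ a₁
  rw [hK, hnorm] at key
  simp only [hσ1, hσ] at key
  rw [key]
  refine and_congr (by norm_num [sum_range_succ])
    ⟨fun h => by linear_combination h, fun h => by linear_combination h⟩
end

section
/- Let f(x) = a_0x + a_1x^q + a_2x^{q^2} - x^{q^3} over F_{q^6} with a_0 ≠ 0. Then f has exactly q^3 roots in F_{q^6} if and only if N_{q^6/q}(a_0) = 1, a_0^{q^3+q+1} + a_2^{q^3}a_1^{q^2}a_0^{q+1} - a_2^q a_1 = a_0^q, a_2^{q+1} = -a_0^{q^3+q^2+q+1}a_1^{q^4} - a_1^q, and a_1^{q+1} = a_2 a_0^q + a_0^{q^2+q+1}a_2^{q^3}. -/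
/-!
Write `P = X^{q^3} - a₂X^{q^2} - a₁X^q - a₀X = -f`. As `P` is monic of degree `q^3`, it has
`q^3` roots in `L = 𝔽_{q^6}` iff it divides `X^{q^6} - X`. Since
`P^{q^j} = X^{q^{j+3}} - a₂^{q^j}X^{q^{j+2}} - a₁^{q^j}X^{q^{j+1}} - a₀^{q^j}X^{q^j}`, reducing
`X^{q^6}` modulo `P` one `q`-degree at a time leaves a remainder `r₂X^{q^2} + r₁X^q + r₀X`, so
`P ∣ X^{q^6} - X` iff `r₀ = r₁ = r₂ = 0`.

When this holds, the roots form an `𝔽_q`-subspace `U` and `-a₀`, the coefficient of `X`, is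
`∏_{u ∈ U∖0} (-u)`. The fibres of `u ↦ u^{q-1}` on `U∖0` are the cosets `λ𝔽_q^*`; each has
product `-λ^{q-1}`, of norm `λ^{q^6-1} = 1`, and `N(-1) = 1`, hence `N(a₀) = 1`.

Given `N(a₀) = 1`, the equations `r₀ = r₁ = r₂ = 0` rearrange into the three stated identities;
the only step that is not polynomial algebra applies `x ↦ x^{q^4}` to the consequence
`b a₀^{q+1} + a₁ = 0` of `r₀ = r₁ = 0`, where `b = a₁^{q^3} + a₂^{q^3+q^2}`.
-/

open Polynomial

theorem Finset.pow_prod_neg {R ι : Type*} [CommRing R] {M : ℕ} (hM : (-1 : R) ^ M = 1)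
    (s : Finset ι) (f : ι → R) : (∏ i ∈ s, -f i) ^ M = (∏ i ∈ s, f i) ^ M := by
  rw [Finset.prod_neg, mul_pow, ← pow_mul, mul_comm s.card, pow_mul, hM, one_pow, one_mul]

section FiniteFieldRoots

variable {L : Type*} [Field L] [Fintype L]

theorem Polynomial.splits_and_nodup_roots_of_dvd_X_pow_card_sub_X {P : L[X]}
    (h : P ∣ X ^ Fintype.card L - X) : P.Splits ∧ P.roots.Nodup := by
  have hone := Fintype.one_lt_card (α := L)
  have hne := FiniteField.X_pow_card_sub_X_ne_zero L hone
  have hsplit : (X ^ Fintype.card L - X : L[X]).Splits := by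
    rw [splits_iff_card_roots, FiniteField.roots_X_pow_card_sub_X,
      FiniteField.X_pow_card_sub_X_natDegree_eq L hone]
    rfl
  refine ⟨hsplit.of_dvd hne h, Multiset.nodup_of_le (roots.le_of_dvd hne h) ?_⟩
  rw [FiniteField.roots_X_pow_card_sub_X]
  exact Finset.univ.nodup

theorem Polynomial.prod_X_sub_C_roots_toFinset_of_dvd_X_pow_card_sub_X [DecidableEq L] {P : L[X]}
    (hP : P.Monic) (h : P ∣ X ^ Fintype.card L - X) :
    ∏ x ∈ P.roots.toFinset, (X - C x) = P := by
  obtain ⟨hsplit, hnodup⟩ := splits_and_nodup_roots_of_dvd_X_pow_card_sub_X h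
  rw [Finset.prod_eq_multiset_prod, Multiset.toFinset_val, Multiset.dedup_eq_self.mpr hnodup,
    ← hsplit.eq_prod_roots_of_monic hP]

theorem Polynomial.prod_neg_roots_toFinset_eq_eval_zero [DecidableEq L] {P : L[X]}
    (hP : P.Monic) (h : P ∣ X ^ Fintype.card L - X) :
    ∏ x ∈ P.roots.toFinset, -x = P.eval 0 := by
  conv_rhs => rw [← prod_X_sub_C_roots_toFinset_of_dvd_X_pow_card_sub_X hP h]
  simp [eval_prod]

theorem Polynomial.coeff_one_eq_prod_neg_roots_toFinset_erase_zero [DecidableEq L] {P : L[X]}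
    (hP : P.Monic) (h : P ∣ X ^ Fintype.card L - X) (h0 : P.eval 0 = 0) :
    P.coeff 1 = ∏ x ∈ P.roots.toFinset.erase 0, -x := by
  have h0mem : (0 : L) ∈ P.roots.toFinset := by simp [mem_roots hP.ne_zero, h0]
  conv_lhs => rw [← prod_X_sub_C_roots_toFinset_of_dvd_X_pow_card_sub_X hP h,
    ← Finset.mul_prod_erase _ _ h0mem, map_zero, sub_zero]
  rw [coeff_X_mul _ 0, coeff_zero_eq_eval_zero, eval_prod]
  simp

theorem Polynomial.ncard_setOf_eval_eq_zero_eq_natDegree_iff {P : L[X]} (hP : P.Monic) :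
    {x | P.eval x = 0}.ncard = P.natDegree ↔ P ∣ X ^ Fintype.card L - X := by
  classical
  have hset : {x | P.eval x = 0} = ↑P.roots.toFinset := by
    ext x
    simp [mem_roots hP.ne_zero]
  rw [hset, Set.ncard_coe_finset]
  constructor
  · intro h
    have hcard : P.roots.card = P.natDegree :=
      le_antisymm (card_roots' P) (h ▸ Multiset.toFinset_card_le _)
    have hnodup : P.roots.Nodup :=
      Multiset.toFinset_card_eq_card_iff_nodup.mp (h.trans hcard.symm)
    rw [← prod_multiset_X_sub_C_of_monic_of_roots_card_eq hP hcard,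
      Multiset.prod_X_sub_C_dvd_iff_le_roots
        (FiniteField.X_pow_card_sub_X_ne_zero L (Fintype.one_lt_card (α := L))),
      FiniteField.roots_X_pow_card_sub_X, Multiset.le_iff_subset hnodup]
    exact fun x _ => Finset.mem_univ_val x
  · intro h
    obtain ⟨hsplit, hnodup⟩ := splits_and_nodup_roots_of_dvd_X_pow_card_sub_X h
    rw [Multiset.toFinset_card_of_nodup hnodup, hsplit.natDegree_eq_card_roots]

theorem FiniteField.pow_prod_eq_one_of_forall_pow_eq_mem [DecidableEq L] {n M : ℕ}
    (hnM : n * M = Fintype.card L - 1) (hM : (-1 : L) ^ M = 1) {S : Finset L} (h0 : 0 ∉ S)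
    (hS : ∀ x ∈ S, ∀ y : L, y ^ n = x ^ n → y ∈ S) : (∏ x ∈ S, x) ^ M = 1 := by
  have hn : n ≠ 0 := by
    rintro rfl
    have := Fintype.one_lt_card (α := L)
    omega
  rw [← Finset.prod_fiberwise_of_maps_to (fun x hx => Finset.mem_image_of_mem (· ^ n) hx),
    ← Finset.prod_pow]
  refine Finset.prod_eq_one fun y hy => ?_
  obtain ⟨x, hx, rfl⟩ := Finset.mem_image.mp hy
  have hx0 : x ≠ 0 := fun h => h0 (h ▸ hx)
  have hmonic : (X ^ n - C (x ^ n)).Monic := monic_X_pow_sub_C _ hn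
  have hdvd : X ^ n - C (x ^ n) ∣ X ^ Fintype.card L - X := by
    have hxM : (x ^ n) ^ M = 1 := by rw [← pow_mul, hnM, FiniteField.pow_card_sub_one_eq_one x hx0]
    have hfactor : (X ^ Fintype.card L - X : L[X]) = X * ((X ^ n) ^ M - C (x ^ n) ^ M) := by
      rw [← map_pow, hxM, map_one, ← pow_mul, hnM, mul_sub, mul_one, ← pow_succ',
        Nat.sub_add_cancel Fintype.card_pos]
    rw [hfactor]
    exact (sub_dvd_pow_sub_pow _ _ M).mul_left X
  -- the fibre through `x` is the root set of `X^n - x^n`, whose roots multiply to `±x^n`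
  have hfiber : {z ∈ S | z ^ n = x ^ n} = (X ^ n - C (x ^ n)).roots.toFinset := by
    ext z
    simp only [Finset.mem_filter, Multiset.mem_toFinset, mem_roots hmonic.ne_zero, IsRoot.def,
      eval_sub, eval_pow, eval_X, eval_C, sub_eq_zero]
    exact ⟨And.right, fun hz => ⟨hS x hx z hz, hz⟩⟩
  rw [hfiber, ← Finset.pow_prod_neg hM, prod_neg_roots_toFinset_eq_eval_zero hmonic hdvd]
  simp [zero_pow hn, neg_pow, hM, ← pow_mul, hnM, FiniteField.pow_card_sub_one_eq_one x hx0]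

end FiniteFieldRoots

theorem Polynomial.trinomial_eq_zero_iff {R : Type*} [Semiring R] {k m n : ℕ} {u v w : R}
    (hkm : k < m) (hmn : m < n) : trinomial k m n u v w = 0 ↔ u = 0 ∧ v = 0 ∧ w = 0 := by
  refine ⟨fun h => ⟨?_, ?_, ?_⟩, fun ⟨hu, hv, hw⟩ => by simp [trinomial_def, hu, hv, hw]⟩
  · rw [← trinomial_trailing_coeff' hkm hmn (u := u) (v := v) (w := w), h, coeff_zero]
  · rw [← trinomial_middle_coeff hkm hmn (u := u) (v := v) (w := w), h, coeff_zero]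
  · rw [← trinomial_leading_coeff' hkm hmn (u := u) (v := v) (w := w), h, coeff_zero]

section QPolynomial

variable {L : Type*} [Field L] {q : ℕ}

/-- `-f`, made monic. -/
noncomputable def qPoly (q : ℕ) (a₀ a₁ a₂ : L) : L[X] :=
  X ^ q ^ 3 - trinomial 1 q (q ^ 2) a₀ a₁ a₂

theorem eval_qPoly (a₀ a₁ a₂ x : L) :
    (qPoly q a₀ a₁ a₂).eval x = x ^ q ^ 3 - (a₀ * x + a₁ * x ^ q + a₂ * x ^ q ^ 2) := by
  simp [qPoly, trinomial_def]

theorem eval_qPoly_mul {c : L} (hc : c ^ q = c) (a₀ a₁ a₂ x : L) :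
    (qPoly q a₀ a₁ a₂).eval (c * x) = c * (qPoly q a₀ a₁ a₂).eval x := by
  have hc2 : c ^ q ^ 2 = c := by rw [sq, pow_mul, hc, hc]
  have hc3 : c ^ q ^ 3 = c := by rw [pow_succ, pow_mul, hc2, hc]
  simp only [eval_qPoly, mul_pow, hc, hc2, hc3]
  ring

theorem natDegree_trinomial_le (hq : 1 ≤ q) (a₀ a₁ a₂ : L) :
    (trinomial 1 q (q ^ 2) a₀ a₁ a₂).natDegree ≤ q ^ 2 := by
  rw [trinomial_def]
  compute_degree
  exact max_le (Nat.one_le_pow _ _ hq) (max_le (Nat.le_self_pow two_ne_zero q) le_rfl)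

theorem natDegree_trinomial_lt (hq : 2 ≤ q) (a₀ a₁ a₂ : L) :
    (trinomial 1 q (q ^ 2) a₀ a₁ a₂).natDegree < (X ^ q ^ 3 : L[X]).natDegree := by
  rw [natDegree_X_pow]
  exact (natDegree_trinomial_le (by omega) a₀ a₁ a₂).trans_lt
    (Nat.pow_lt_pow_right hq (by norm_num))

theorem monic_qPoly (hq : 2 ≤ q) (a₀ a₁ a₂ : L) : (qPoly q a₀ a₁ a₂).Monic :=
  (monic_X_pow _).sub_of_left (degree_lt_degree (natDegree_trinomial_lt hq a₀ a₁ a₂))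

theorem natDegree_qPoly (hq : 2 ≤ q) (a₀ a₁ a₂ : L) : (qPoly q a₀ a₁ a₂).natDegree = q ^ 3 := by
  rw [qPoly, natDegree_sub_eq_left_of_natDegree_lt (natDegree_trinomial_lt hq a₀ a₁ a₂),
    natDegree_X_pow]

theorem coeff_qPoly_one (hq : 2 ≤ q) (a₀ a₁ a₂ : L) : (qPoly q a₀ a₁ a₂).coeff 1 = -a₀ := by
  have hq2 : q < q ^ 2 := by nlinarith
  have hq3 : 1 ≠ q ^ 3 := (Nat.one_lt_pow (by norm_num) (by omega)).ne
  rw [qPoly, coeff_sub, coeff_X_pow, if_neg hq3, trinomial_trailing_coeff' (by omega) hq2, zero_sub]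

theorem eval_qPoly_eq_zero_of_pow_sub_one_eq (hq : 1 ≤ q) {a₀ a₁ a₂ x y : L} (hx0 : x ≠ 0)
    (hx : (qPoly q a₀ a₁ a₂).eval x = 0) (hy : y ^ (q - 1) = x ^ (q - 1)) :
    (qPoly q a₀ a₁ a₂).eval y = 0 := by
  have hc : (y / x) ^ q = y / x := by
    have h1 : (y / x) ^ (q - 1) = 1 := by rw [div_pow, hy, div_self (pow_ne_zero _ hx0)]
    rw [← Nat.sub_add_cancel hq, pow_succ, h1, one_mul]
  rw [← div_mul_cancel₀ y hx0, eval_qPoly_mul hc, hx, mul_zero]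

theorem pow_eq_one_of_qPoly_dvd_X_pow_card_sub_X [Fintype L] (hq : 2 ≤ q) {M : ℕ}
    (hqM : (q - 1) * M = Fintype.card L - 1) (hM : (-1 : L) ^ M = 1) {a₀ a₁ a₂ : L}
    (hdvd : qPoly q a₀ a₁ a₂ ∣ X ^ Fintype.card L - X) : a₀ ^ M = 1 := by
  classical
  have hq1 : q - 1 ≠ 0 := by omega
  have hmonic := monic_qPoly hq a₀ a₁ a₂
  have h0 : (qPoly q a₀ a₁ a₂).eval 0 = 0 := by
    rw [eval_qPoly]
    simp [show q ≠ 0 by omega]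
  have hfiber : ∀ x ∈ (qPoly q a₀ a₁ a₂).roots.toFinset.erase 0, ∀ y : L,
      y ^ (q - 1) = x ^ (q - 1) → y ∈ (qPoly q a₀ a₁ a₂).roots.toFinset.erase 0 := by
    intro x hx y hy
    simp only [Finset.mem_erase, Multiset.mem_toFinset, mem_roots hmonic.ne_zero,
      IsRoot.def] at hx ⊢
    refine ⟨fun hy0 => hx.1 ?_, eval_qPoly_eq_zero_of_pow_sub_one_eq (by omega) hx.1 hx.2 hy⟩
    rwa [hy0, zero_pow hq1, eq_comm, pow_eq_zero_iff hq1] at hy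
  calc a₀ ^ M = (-a₀) ^ M := by rw [neg_pow, hM, one_mul]
    _ = (∏ x ∈ (qPoly q a₀ a₁ a₂).roots.toFinset.erase 0, x) ^ M := by
      rw [← coeff_qPoly_one hq, coeff_one_eq_prod_neg_roots_toFinset_erase_zero hmonic hdvd h0,
        Finset.pow_prod_neg hM]
    _ = 1 := FiniteField.pow_prod_eq_one_of_forall_pow_eq_mem hqM hM
      (Finset.notMem_erase 0 _) hfiber

/-- `qPolyB` and `qPolyC` are the coefficients of `X^{q^4}` and `X^{q^3}` met while reducing
`X^{q^6}` modulo `qPoly`, one `q`-degree at a time. -/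
def qPolyB (q : ℕ) (a₁ a₂ : L) : L := a₁ ^ q ^ 3 + a₂ ^ q ^ 3 * a₂ ^ q ^ 2

def qPolyC (q : ℕ) (a₀ a₁ a₂ : L) : L :=
  a₀ ^ q ^ 3 + a₂ ^ q ^ 3 * a₁ ^ q ^ 2 + qPolyB q a₁ a₂ * a₂ ^ q

section Conditions

variable {a₀ a₁ a₂ : L}

theorem qPolyB_eq_zero_iff (ha₀ : a₀ ≠ 0) (hE : qPolyB q a₁ a₂ * a₀ ^ (q + 1) + a₁ = 0) :
    qPolyB q a₁ a₂ = 0 ↔ a₁ = 0 := by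
  refine ⟨fun hb => by simpa [hb] using hE, fun ha₁ => ?_⟩
  subst ha₁
  rw [add_zero] at hE
  exact (mul_eq_zero.mp hE).resolve_right (pow_ne_zero _ ha₀)

theorem eq_zero_of_qPolyB_eq_zero (hq : q ≠ 0) (hb : qPolyB q a₁ a₂ = 0) (ha₁ : a₁ = 0) :
    a₂ = 0 := by
  simpa [qPolyB, ha₁, hq] using hb

theorem qPoly_remainder_eq_zero_iff (hq : q ≠ 0) (ha₀ : a₀ ≠ 0) :
    (qPolyC q a₀ a₁ a₂ * a₀ - 1 = 0 ∧ qPolyB q a₁ a₂ * a₀ ^ q + qPolyC q a₀ a₁ a₂ * a₁ = 0 ∧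
        a₂ ^ q ^ 3 * a₀ ^ q ^ 2 + qPolyB q a₁ a₂ * a₁ ^ q + qPolyC q a₀ a₁ a₂ * a₂ = 0) ↔
      qPolyB q a₁ a₂ * a₀ ^ (q + 1) + a₁ = 0 ∧
      a₀ ^ (q ^ 3 + q + 1) + a₂ ^ q ^ 3 * a₁ ^ q ^ 2 * a₀ ^ (q + 1) - a₂ ^ q * a₁ = a₀ ^ q ∧
      a₁ ^ (q + 1) = a₂ * a₀ ^ q + a₀ ^ (q ^ 2 + q + 1) * a₂ ^ q ^ 3 := by
  simp only [qPolyC]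
  constructor
  · rintro ⟨h0, h1, h2⟩
    have hE : qPolyB q a₁ a₂ * a₀ ^ (q + 1) + a₁ = 0 := by linear_combination a₀ * h1 - a₁ * h0
    refine ⟨hE, by linear_combination a₀ ^ q * h0 - a₂ ^ q * hE, ?_⟩
    by_cases hb : qPolyB q a₁ a₂ = 0
    · have ha₁ := (qPolyB_eq_zero_iff ha₀ hE).mp hb
      simp [ha₁, eq_zero_of_qPolyB_eq_zero hq hb ha₁, hq]
    · refine sub_eq_zero.mp (mul_left_cancel₀ hb ?_)
      linear_combination a₁ * h2 - a₂ * h1 - a₂ ^ q ^ 3 * a₀ ^ q ^ 2 * a₀ * h1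
        + a₂ ^ q ^ 3 * a₀ ^ q ^ 2 * a₁ * h0
  · rintro ⟨hE, hB, hD⟩
    have h0 : (a₀ ^ q ^ 3 + a₂ ^ q ^ 3 * a₁ ^ q ^ 2 + qPolyB q a₁ a₂ * a₂ ^ q) * a₀ - 1 = 0 :=
      mul_left_cancel₀ (pow_ne_zero q ha₀) (by linear_combination hB + a₂ ^ q * hE)
    have h1 : qPolyB q a₁ a₂ * a₀ ^ q +
        (a₀ ^ q ^ 3 + a₂ ^ q ^ 3 * a₁ ^ q ^ 2 + qPolyB q a₁ a₂ * a₂ ^ q) * a₁ = 0 :=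
      mul_left_cancel₀ ha₀ (by linear_combination hE + a₁ * h0)
    refine ⟨h0, h1, ?_⟩
    by_cases ha₁ : a₁ = 0
    · have hb := (qPolyB_eq_zero_iff ha₀ hE).mpr ha₁
      simp [ha₁, eq_zero_of_qPolyB_eq_zero hq hb ha₁, hq]
    · refine mul_left_cancel₀ ha₁ ?_
      linear_combination qPolyB q a₁ a₂ * hD + a₂ * h1 + a₂ ^ q ^ 3 * a₀ ^ q ^ 2 * a₀ * h1
        - a₂ ^ q ^ 3 * a₀ ^ q ^ 2 * a₁ * h0

end Conditions

section Frobenius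

variable {p k : ℕ} [ExpChar L p]

theorem qPoly_pow (hq : q = p ^ k) (a₀ a₁ a₂ : L) (j : ℕ) :
    qPoly q a₀ a₁ a₂ ^ q ^ j = X ^ (q ^ 3 * q ^ j) - (C (a₀ ^ q ^ j) * X ^ q ^ j +
      C (a₁ ^ q ^ j) * X ^ (q * q ^ j) + C (a₂ ^ q ^ j) * X ^ (q ^ 2 * q ^ j)) := by
  have hqj : q ^ j = p ^ (k * j) := by rw [hq, pow_mul]
  rw [qPoly, trinomial_def, hqj, sub_pow_expChar_pow, add_pow_expChar_pow, add_pow_expChar_pow]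
  simp only [mul_pow, ← map_pow, ← pow_mul, pow_one]

theorem X_pow_pow_six_sub_X_eq (hq : q = p ^ k) (a₀ a₁ a₂ : L) :
    X ^ q ^ 6 - X = qPoly q a₀ a₁ a₂ ^ q ^ 3 + C (a₂ ^ q ^ 3) * qPoly q a₀ a₁ a₂ ^ q ^ 2 +
      C (qPolyB q a₁ a₂) * qPoly q a₀ a₁ a₂ ^ q + C (qPolyC q a₀ a₁ a₂) * qPoly q a₀ a₁ a₂ +
      trinomial 1 q (q ^ 2) (qPolyC q a₀ a₁ a₂ * a₀ - 1)
        (qPolyB q a₁ a₂ * a₀ ^ q + qPolyC q a₀ a₁ a₂ * a₁)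
        (a₂ ^ q ^ 3 * a₀ ^ q ^ 2 + qPolyB q a₁ a₂ * a₁ ^ q + qPolyC q a₀ a₁ a₂ * a₂) := by
  have h1 := qPoly_pow hq a₀ a₁ a₂ 1
  simp only [pow_one] at h1
  rw [qPoly_pow hq a₀ a₁ a₂ 3, qPoly_pow hq a₀ a₁ a₂ 2, h1]
  simp only [qPoly, trinomial_def, qPolyC, qPolyB, map_add, map_mul, map_pow, map_sub, map_one]
  ring

theorem qPoly_dvd_X_pow_pow_six_sub_X_iff_remainder_eq_zero (hq : q = p ^ k) (hq2 : 2 ≤ q)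
    (a₀ a₁ a₂ : L) :
    qPoly q a₀ a₁ a₂ ∣ X ^ q ^ 6 - X ↔
      qPolyC q a₀ a₁ a₂ * a₀ - 1 = 0 ∧ qPolyB q a₁ a₂ * a₀ ^ q + qPolyC q a₀ a₁ a₂ * a₁ = 0 ∧
        a₂ ^ q ^ 3 * a₀ ^ q ^ 2 + qPolyB q a₁ a₂ * a₁ ^ q + qPolyC q a₀ a₁ a₂ * a₂ = 0 := by
  have hq0 : q ≠ 0 := by omega
  have hmult : qPoly q a₀ a₁ a₂ ∣ qPoly q a₀ a₁ a₂ ^ q ^ 3 +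
      C (a₂ ^ q ^ 3) * qPoly q a₀ a₁ a₂ ^ q ^ 2 + C (qPolyB q a₁ a₂) * qPoly q a₀ a₁ a₂ ^ q +
        C (qPolyC q a₀ a₁ a₂) * qPoly q a₀ a₁ a₂ :=
    dvd_add (dvd_add (dvd_add (dvd_pow_self _ (pow_ne_zero 3 hq0))
      ((dvd_pow_self _ (pow_ne_zero 2 hq0)).mul_left _)) ((dvd_pow_self _ hq0).mul_left _))
      (dvd_mul_left _ _)
  have hlt : ∀ u v w : L, (trinomial 1 q (q ^ 2) u v w).degree < (qPoly q a₀ a₁ a₂).degree := by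
    intro u v w
    rw [qPoly,
      degree_sub_eq_left_of_degree_lt (degree_lt_degree (natDegree_trinomial_lt hq2 _ _ _))]
    exact degree_lt_degree (natDegree_trinomial_lt hq2 u v w)
  have h1q : 1 < q := by omega
  have hqq : q < q ^ 2 := by nlinarith
  rw [X_pow_pow_six_sub_X_eq hq, dvd_add_right hmult, ← trinomial_eq_zero_iff h1q hqq]
  exact ⟨fun h => eq_zero_of_dvd_of_degree_lt h (hlt _ _ _), fun h => h ▸ dvd_zero _⟩

theorem qPolyB_mul_add_eq_zero_iff (hq : q = p ^ k) (hfix : ∀ x : L, x ^ q ^ 6 = x) {a₀ a₁ a₂ : L}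
    (ha₀ : a₀ ≠ 0) (hN : a₀ ^ (q ^ 5 + q ^ 4 + q ^ 3 + q ^ 2 + q + 1) = 1) :
    qPolyB q a₁ a₂ * a₀ ^ (q + 1) + a₁ = 0 ↔
      a₂ ^ (q + 1) = -(a₀ ^ (q ^ 3 + q ^ 2 + q + 1) * a₁ ^ q ^ 4) - a₁ ^ q := by
  have hq4 : q ^ 4 = p ^ (k * 4) := by rw [hq, pow_mul]
  have h6 : ∀ x : L, x ^ (q ^ 2 * q ^ 4) = x := fun x => by rw [← pow_add, hfix]
  have h7 : ∀ x : L, x ^ (q ^ 3 * q ^ 4) = x ^ q := fun x => by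
    rw [show q ^ 3 * q ^ 4 = q ^ 6 * q by ring, pow_mul, hfix]
  have hσ : (qPolyB q a₁ a₂ * a₀ ^ (q + 1) + a₁) ^ q ^ 4 =
      (a₁ ^ q + a₂ ^ q * a₂) * a₀ ^ (q ^ 5 + q ^ 4) + a₁ ^ q ^ 4 := by
    rw [hq4, add_pow_expChar_pow, mul_pow, qPolyB, add_pow_expChar_pow, ← hq4, mul_pow,
      ← pow_mul, ← pow_mul, ← pow_mul, ← pow_mul, h7, h7, h6,
      show (q + 1) * q ^ 4 = q ^ 5 + q ^ 4 by ring]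
  calc _ ↔ (qPolyB q a₁ a₂ * a₀ ^ (q + 1) + a₁) ^ q ^ 4 = 0 :=
        (pow_eq_zero_iff (pow_ne_zero 4 (hq ▸ pow_ne_zero k (expChar_ne_zero L p)))).symm
    _ ↔ a₀ ^ (q ^ 3 + q ^ 2 + q + 1) * (qPolyB q a₁ a₂ * a₀ ^ (q + 1) + a₁) ^ q ^ 4 = 0 :=
        (mul_eq_zero_iff_left (pow_ne_zero _ ha₀)).symm
    _ ↔ _ := by
      rw [hσ]
      constructor <;> intro h
      · linear_combination h - (a₁ ^ q + a₂ ^ q * a₂) * hN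
      · linear_combination h + (a₁ ^ q + a₂ ^ q * a₂) * hN

theorem qPoly_dvd_X_pow_pow_six_sub_X_iff (hq : q = p ^ k) (hq2 : 2 ≤ q)
    (hfix : ∀ x : L, x ^ q ^ 6 = x) {a₀ a₁ a₂ : L} (ha₀ : a₀ ≠ 0)
    (hN : a₀ ^ (q ^ 5 + q ^ 4 + q ^ 3 + q ^ 2 + q + 1) = 1) :
    qPoly q a₀ a₁ a₂ ∣ X ^ q ^ 6 - X ↔
      a₀ ^ (q ^ 3 + q + 1) + a₂ ^ q ^ 3 * a₁ ^ q ^ 2 * a₀ ^ (q + 1) - a₂ ^ q * a₁ = a₀ ^ q ∧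
      a₂ ^ (q + 1) = -(a₀ ^ (q ^ 3 + q ^ 2 + q + 1) * a₁ ^ q ^ 4) - a₁ ^ q ∧
      a₁ ^ (q + 1) = a₂ * a₀ ^ q + a₀ ^ (q ^ 2 + q + 1) * a₂ ^ q ^ 3 := by
  rw [qPoly_dvd_X_pow_pow_six_sub_X_iff_remainder_eq_zero hq hq2,
    qPoly_remainder_eq_zero_iff (by omega) ha₀, qPolyB_mul_add_eq_zero_iff hq hfix ha₀ hN,
    and_left_comm]

theorem neg_one_pow_geom_sum_six (hq : q = p ^ k) :
    (-1 : L) ^ (q ^ 5 + q ^ 4 + q ^ 3 + q ^ 2 + q + 1) = 1 := by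
  have h : (-1 : L) ^ q = -1 := hq ▸ neg_one_pow_expChar_pow L p k
  rw [show q ^ 5 + q ^ 4 + q ^ 3 + q ^ 2 + q + 1 = (q + 1) * (q ^ 4 + q ^ 2 + 1) by ring,
    pow_mul, pow_succ (-1 : L) q, h, neg_one_mul, neg_neg, one_pow]

end Frobenius

theorem ncard_setOf_eq_zero_iff_qPoly_dvd [Fintype L] (hq : 2 ≤ q)
    (hL : Fintype.card L = q ^ 6) (a₀ a₁ a₂ : L) :
    {x : L | a₀ * x + a₁ * x ^ q + a₂ * x ^ q ^ 2 - x ^ q ^ 3 = 0}.ncard = q ^ 3 ↔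
      qPoly q a₀ a₁ a₂ ∣ X ^ q ^ 6 - X := by
  have hset : {x : L | a₀ * x + a₁ * x ^ q + a₂ * x ^ q ^ 2 - x ^ q ^ 3 = 0} =
      {x | (qPoly q a₀ a₁ a₂).eval x = 0} := by
    ext x
    rw [Set.mem_ofPred_eq, Set.mem_ofPred_eq, eval_qPoly, ← neg_sub, neg_eq_zero]
  rw [hset, ← hL, ← natDegree_qPoly hq a₀ a₁ a₂]
  exact ncard_setOf_eval_eq_zero_eq_natDegree_iff (monic_qPoly hq a₀ a₁ a₂)

end QPolynomial

theorem Nat.pow_six_sub_one_div_sub_one {q : ℕ} (hq : 2 ≤ q) :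
    (q ^ 6 - 1) / (q - 1) = q ^ 5 + q ^ 4 + q ^ 3 + q ^ 2 + q + 1 := by
  rw [← Nat.geomSum_eq hq]
  simp only [Finset.sum_range_succ, Finset.sum_range_zero]
  ring

theorem Nat.sub_one_mul_geom_sum_six {q : ℕ} (hq : 2 ≤ q) :
    (q - 1) * (q ^ 5 + q ^ 4 + q ^ 3 + q ^ 2 + q + 1) = q ^ 6 - 1 := by
  rw [← Nat.pow_six_sub_one_div_sub_one hq,
    Nat.mul_div_cancel' (by simpa using Nat.sub_dvd_pow_sub_pow q 1 6)]

/-- `f(x) = a_0 x + a_1 x^q + a_2 x^{q^2} - x^{q^3}` over `F_{q^6}` with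
`a_0 ≠ 0` has exactly `q^3` roots iff `N_{q^6/q}(a_0) = 1`,
`a_0^{q^3+q+1} + a_2^{q^3} a_1^{q^2} a_0^{q+1} - a_2^q a_1 = a_0^q`,
`a_2^{q+1} = -a_0^{q^3+q^2+q+1} a_1^{q^4} - a_1^q`, and
`a_1^{q+1} = a_2 a_0^q + a_0^{q^2+q+1} a_2^{q^3}`. -/
theorem stmt19 (q : ℕ) (hq : IsPrimePow q)
    (L : Type*) [Field L] [Fintype L] (hL : Fintype.card L = q ^ 6)
    (a₀ a₁ a₂ : L) (ha₀ : a₀ ≠ 0) :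
    Set.ncard {x : L | a₀ * x + a₁ * x ^ q + a₂ * x ^ q ^ 2 - x ^ q ^ 3 = 0} = q ^ 3
      ↔ (a₀ ^ ((q ^ 6 - 1) / (q - 1)) = 1 ∧
         a₀ ^ (q ^ 3 + q + 1) + a₂ ^ q ^ 3 * a₁ ^ q ^ 2 * a₀ ^ (q + 1) - a₂ ^ q * a₁ = a₀ ^ q ∧
         a₂ ^ (q + 1) = -(a₀ ^ (q ^ 3 + q ^ 2 + q + 1) * a₁ ^ q ^ 4) - a₁ ^ q ∧
         a₁ ^ (q + 1) = a₂ * a₀ ^ q + a₀ ^ (q ^ 2 + q + 1) * a₂ ^ q ^ 3) := by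
  obtain ⟨p, k, hp, hk, hpk⟩ := hq
  have := Fact.mk hp.nat_prime
  have : CharP L p := charP_of_card_eq_prime_pow (hL.trans (by rw [← hpk, ← pow_mul]))
  have hq2 : 2 ≤ q := hpk ▸ hp.nat_prime.two_le.trans (Nat.le_self_pow hk.ne' p)
  have hfix : ∀ x : L, x ^ q ^ 6 = x := hL ▸ FiniteField.pow_card
  have hnorm : qPoly q a₀ a₁ a₂ ∣ X ^ q ^ 6 - X →
      a₀ ^ (q ^ 5 + q ^ 4 + q ^ 3 + q ^ 2 + q + 1) = 1 := fun h =>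
    pow_eq_one_of_qPoly_dvd_X_pow_card_sub_X hq2 (hL ▸ Nat.sub_one_mul_geom_sum_six hq2)
      (neg_one_pow_geom_sum_six hpk.symm) (hL ▸ h)
  rw [ncard_setOf_eq_zero_iff_qPoly_dvd hq2 hL, Nat.pow_six_sub_one_div_sub_one hq2]
  constructor
  · intro h
    exact ⟨hnorm h, (qPoly_dvd_X_pow_pow_six_sub_X_iff hpk.symm hq2 hfix ha₀ (hnorm h)).mp h⟩
  · rintro ⟨hN, h⟩
    exact (qPoly_dvd_X_pow_pow_six_sub_X_iff hpk.symm hq2 hfix ha₀ hN).mpr h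
end
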